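/- arXiv:1309.2216 — 4 statements merged into one kernel-verified Lean document; each statement's English description precedes it below -/
import Mathlib

section
/- Let n be a positive integer. The map X ↦ top(X) on triangulations of the punctured n-gon is injective: if X, X' ∈ 𝒯(n) satisfy top(X) = top(X'), then X = X'. -/
/-!
Combinatorial model of admissible arcs and triangulations of a regular
`n`-gon with one puncture (following Adachi, "The classification of
τ-tilting modules over Nakayama algebras").
-/

namespace Punctured

/-- Admissible arcs in a regular `n`-gon with one puncture:
an *inner arc* `inner i t` runs counterclockwise from vertex `i` to vertex
`i + t` (with `2 ≤ t ≤ n` required for admissibility); a *projective arc*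
`proj j` runs from the puncture to the vertex `j`. -/
inductive Arc (n : ℕ) : Type
  | inner (i : ZMod n) (t : ℕ) : Arc n
  | proj (j : ZMod n) : Arc n

namespace Arc

/-- The terminal point of an admissible arc. -/
def terminal {n : ℕ} : Arc n → ZMod n
  | .inner i t => i + (t : ZMod n)
  | .proj j => j

/-- Admissibility: inner arcs must have length `2 ≤ t ≤ n`. -/
def IsAdmissible {n : ℕ} : Arc n → Prop
  | .inner _ t => 2 ≤ t ∧ t ≤ n
  | .proj _ => True

/-- Compatibility (non-crossing) of two admissible arcs, defined via
lifts to `ℤ`. -/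
def Compatible {n : ℕ} : Arc n → Arc n → Prop
  | .inner i t, .inner k s =>
      ¬ ∃ x y : ℤ, (x : ZMod n) = i ∧ (y : ZMod n) = k ∧
        ((x < y ∧ y < x + (t : ℤ) ∧ x + (t : ℤ) < y + (s : ℤ)) ∨
         (y < x ∧ x < y + (s : ℤ) ∧ y + (s : ℤ) < x + (t : ℤ)))
  | .inner i t, .proj j =>
      ¬ ∃ x y : ℤ, (x : ZMod n) = i ∧ (y : ZMod n) = j ∧ x < y ∧ y < x + (t : ℤ)
  | .proj j, .inner i t =>
      ¬ ∃ x y : ℤ, (x : ZMod n) = i ∧ (y : ZMod n) = j ∧ x < y ∧ y < x + (t : ℤ)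
  | .proj _, .proj _ => True

end Arc

/-- A set of admissible arcs which is pairwise compatible. -/
def PairwiseCompatible (n : ℕ) (X : Set (Arc n)) : Prop :=
  (∀ a ∈ X, a.IsAdmissible) ∧ ∀ a ∈ X, ∀ b ∈ X, a.Compatible b

/-- A triangulation of the punctured `n`-gon: a pairwise compatible set of
admissible arcs, maximal under inclusion among such sets. -/
def IsTriangulation (n : ℕ) (X : Set (Arc n)) : Prop :=
  PairwiseCompatible n X ∧
    ∀ Y : Set (Arc n), PairwiseCompatible n Y → X ⊆ Y → Y = X

/-- `top(X)`: for each residue class `c`, the number of arcs of `X` with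
terminal point `c`. -/
noncomputable def topSeq (n : ℕ) (X : Set (Arc n)) : ZMod n → ℕ :=
  fun c => {arc ∈ X | Arc.terminal arc = c}.ncard

/-- The representative of `p` modulo `n` lying in `{1, …, n}`. -/
def resRep (n : ℕ) (p : ℤ) : ℕ := ((p - 1) % (n : ℤ)).toNat + 1

/-- `a'_p := Σ_{j=1}^{(p)_n} (a_j - 1)`, the `n`-periodic extension of the
partial-sum sequence of `a`. -/
def psum (n : ℕ) (a : ZMod n → ℕ) (p : ℤ) : ℤ :=
  ∑ j ∈ Finset.Icc 1 (resRep n p), ((a ((j : ℕ) : ZMod n) : ℤ) - 1)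

/-- `‖a'‖ := max {a'_1, …, a'_n}`. -/
noncomputable def pnorm (n : ℕ) (a : ZMod n → ℕ) : ℤ :=
  sSup ((fun i : ℕ => psum n a (i : ℤ)) '' Set.Icc 1 n)

/-- `δ_p = 1` if `a'_p = ‖a'‖` and `δ_p = 0` otherwise. -/
noncomputable def deltaInt (n : ℕ) (a : ZMod n → ℕ) (p : ℤ) : ℤ :=
  if psum n a p = pnorm n a then 1 else 0

/-- `k_s^j := max {k ∈ ℤ : k < j - 1 and a'_k = a'_{j-1} + s}`. -/
noncomputable def kmax (n : ℕ) (a : ZMod n → ℕ) (j s : ℤ) : ℤ :=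
  sSup {k : ℤ | k < j - 1 ∧ psum n a k = psum n a (j - 1) + s}

/-- `ℓ_j(a)`. -/
noncomputable def ellj (n : ℕ) (a : ZMod n → ℕ) (j : ℕ) : ℤ :=
  if (a ((j : ℕ) : ZMod n) : ℤ) - deltaInt n a (j : ℤ) = 0 then 0
  else (j : ℤ) - kmax n a (j : ℤ) ((a ((j : ℕ) : ZMod n) : ℤ) - deltaInt n a (j : ℤ))

/-!
Lift everything to `ℤ`: a triangulation becomes an `n`-periodic family of pairwise non-crossing
chords `(x, v)` with `2 ≤ v - x ≤ n`, together with rays at some points `y`. By maximality the rays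
sit exactly at the exposed points (those under no chord), and the chords under a chord `(u, v)`
triangulate the polygon on `u, …, v`: there are `v - u - 1` of them, and at most `p - u - 1` of
them lie under `[u, p]` for `u < p < v`. Counting terminal points in intervals then shows that
`y` carries a ray iff every interval `(k, y]` contains at least `y - k` terminal points, and that
if `x` is the `s`-th largest start of a chord ending at `j`, then `x` is the largest `k < j - 1`
for which `(k, j - 1]` contains exactly `j - 1 - k - s` terminal points. Both descriptions only
involve `top(X)`.
-/

open Finset
open scoped Classical

variable {n : ℕ}

theorem Arc.Compatible.symm {a b : Arc n} (h : a.Compatible b) : b.Compatible a := by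
  cases a <;> cases b <;> simp only [Arc.Compatible] at h ⊢
  · rintro ⟨x, y, hx, hy, hc⟩
    exact h ⟨y, x, hy, hx, hc.symm⟩
  all_goals exact h

theorem IsTriangulation.mem_of_compatible {X : Set (Arc n)} (hX : IsTriangulation n X)
    {a : Arc n} (ha : a.IsAdmissible) (haa : a.Compatible a)
    (hcompat : ∀ b ∈ X, a.Compatible b) : a ∈ X := by
  have hY : PairwiseCompatible n (insert a X) := by
    refine ⟨?_, ?_⟩
    · rintro b (rfl | hb)
      exacts [ha, hX.1.1 b hb]
    · rintro b (rfl | hb) c (rfl | hc)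
      exacts [haa, hcompat c hc, (hcompat b hb).symm, hX.1.2 b hb c hc]
  exact hX.2 _ hY (Set.subset_insert a X) ▸ Set.mem_insert a X

theorem exists_eq_add_mul_of_intCast_eq {x y : ℤ} (h : (x : ZMod n) = y) :
    ∃ d : ℤ, x = y + d * n := by
  obtain ⟨d, hd⟩ := (ZMod.intCast_eq_intCast_iff_dvd_sub y x n).1 h.symm
  exact ⟨d, by linarith⟩

/-- The lifts to `ℤ` of the arcs of `X`: an inner arc `(i, t)` lifts to the chords `(x, x + t)`
with `x ≡ i`, a projective arc `j` to the rays at the points `y ≡ j`. -/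
def IsChord (X : Set (Arc n)) (x v : ℤ) : Prop :=
  2 ≤ v - x ∧ v - x ≤ n ∧ Arc.inner (x : ZMod n) (v - x).toNat ∈ X

def IsRay (X : Set (Arc n)) (y : ℤ) : Prop := Arc.proj (y : ZMod n) ∈ X

def IsExposed (X : Set (Arc n)) (p : ℤ) : Prop := ∀ x v, IsChord X x v → ¬(x < p ∧ p < v)

variable {X : Set (Arc n)}

theorem isChord_of_mem (hX : ∀ a ∈ X, a.IsAdmissible) {i : ZMod n} {t : ℕ}
    (h : Arc.inner i t ∈ X) {x : ℤ} (hx : (x : ZMod n) = i) : IsChord X x (x + t) := by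
  have ht := hX _ h
  simp only [Arc.IsAdmissible] at ht
  refine ⟨by omega, by omega, ?_⟩
  rwa [add_sub_cancel_left, Int.toNat_natCast, hx]

theorem IsChord.add_mul {x v : ℤ} (h : IsChord X x v) (k : ℤ) :
    IsChord X (x + k * n) (v + k * n) := by
  obtain ⟨h2, hn, hmem⟩ := h
  refine ⟨by omega, by omega, ?_⟩
  simpa [show v + k * n - (x + k * n) = v - x by ring] using hmem

theorem IsExposed.add_mul {p : ℤ} (h : IsExposed X p) (k : ℤ) : IsExposed X (p + k * n) := by
  rintro x v hxv ⟨h₁, h₂⟩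
  exact h _ _ (hxv.add_mul (-k)) ⟨by linarith, by linarith⟩

theorem IsChord.not_cross (hX : PairwiseCompatible n X) {x v y w : ℤ} (hxv : IsChord X x v)
    (hyw : IsChord X y w) : ¬(x < y ∧ y < v ∧ v < w) := by
  intro hc
  have := hX.2 _ hxv.2.2 _ hyw.2.2
  simp only [Arc.Compatible] at this
  refine this ⟨x, y, rfl, rfl, Or.inl ?_⟩
  rw [Int.toNat_of_nonneg (by omega), Int.toNat_of_nonneg (by omega)]
  omega

theorem IsChord.not_between_of_isRay (hX : PairwiseCompatible n X) {x v y : ℤ}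
    (hxv : IsChord X x v) (hy : IsRay X y) : ¬(x < y ∧ y < v) := by
  intro hc
  have := hX.2 _ hxv.2.2 _ hy
  simp only [Arc.Compatible] at this
  refine this ⟨x, y, rfl, rfl, hc.1, ?_⟩
  rw [Int.toNat_of_nonneg (by omega)]
  omega

theorem IsRay.isExposed (hX : PairwiseCompatible n X) {y : ℤ} (hy : IsRay X y) :
    IsExposed X y :=
  fun _ _ hxv => hxv.not_between_of_isRay hX hy

theorem IsTriangulation.isRay (hX : IsTriangulation n X) {y : ℤ} (hy : IsExposed X y) :
    IsRay X y := by
  refine hX.mem_of_compatible trivial trivial fun b hb => ?_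
  cases b with
  | inner k s =>
    rintro ⟨x₁, y₁, hx₁, hy₁, hlt⟩
    obtain ⟨d, rfl⟩ := exists_eq_add_mul_of_intCast_eq hy₁
    exact hy.add_mul d _ _ (isChord_of_mem hX.1.1 hb hx₁) hlt
  | proj j => trivial

theorem IsTriangulation.isChord (hX : IsTriangulation n X) {x v : ℤ} (h2 : 2 ≤ v - x)
    (hn : v - x ≤ n)
    (hchord : ∀ y w, IsChord X y w → ¬(x < y ∧ y < v ∧ v < w) ∧ ¬(y < x ∧ x < w ∧ w < v))
    (hray : ∀ y, IsRay X y → ¬(x < y ∧ y < v)) : IsChord X x v := by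
  have ht : ((v - x).toNat : ℤ) = v - x := Int.toNat_of_nonneg (by omega)
  refine ⟨h2, hn, hX.mem_of_compatible ⟨by omega, by omega⟩ ?_ fun b hb => ?_⟩
  · -- two lifts of the same arc differ by a multiple of `n ≥ v - x`, so they cannot cross
    rintro ⟨x₁, y₁, hx₁, hy₁, hc⟩
    obtain ⟨d, rfl⟩ := exists_eq_add_mul_of_intCast_eq (hy₁.trans hx₁.symm)
    rw [ht] at hc
    rcases lt_trichotomy d 0 with hd | rfl | hd
    · have : d * n ≤ -n := by nlinarith
      omega
    · omega
    · have : (n : ℤ) ≤ d * n := by nlinarith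
      omega
  · cases b with
    | inner k s =>
      rintro ⟨x₁, y₁, hx₁, hy₁, hc⟩
      obtain ⟨d, rfl⟩ := exists_eq_add_mul_of_intCast_eq hx₁
      have hyw := (isChord_of_mem hX.1.1 hb hy₁).add_mul (-d)
      rw [ht] at hc
      rcases hc with ⟨h₁, h₂, h₃⟩ | ⟨h₁, h₂, h₃⟩
      · exact (hchord _ _ hyw).1 ⟨by linarith, by linarith, by linarith⟩
      · exact (hchord _ _ hyw).2 ⟨by linarith, by linarith, by linarith⟩
    | proj j =>
      rintro ⟨x₁, y₁, hx₁, hy₁, hc⟩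
      obtain ⟨d, rfl⟩ := exists_eq_add_mul_of_intCast_eq hx₁
      have hy : IsRay X (y₁ + -d * n) := by
        simpa [IsRay, hy₁] using hb
      rw [ht] at hc
      exact hray _ hy ⟨by linarith [hc.1], by linarith [hc.2]⟩

noncomputable def chordStarts (X : Set (Arc n)) (m : ℤ) : Finset ℤ :=
  (Icc (m - n) (m - 2)).filter (IsChord X · m)

noncomputable def chordsEndingIn (X : Set (Arc n)) (k j : ℤ) : Finset (ℤ × ℤ) :=
  (Ioc k j).biUnion fun m => (chordStarts X m).image (·, m)

noncomputable def chordsIn (X : Set (Arc n)) (u v : ℤ) : Finset (ℤ × ℤ) :=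
  (chordsEndingIn X u v).filter (u ≤ ·.1)

/-- The sides of the triangles of a triangulation: chords and edges of the polygon. -/
def IsSide (X : Set (Arc n)) (u v : ℤ) : Prop := IsChord X u v ∨ v = u + 1

theorem mem_chordStarts {m x : ℤ} : x ∈ chordStarts X m ↔ IsChord X x m := by
  simp only [chordStarts, mem_filter, mem_Icc, and_iff_right_iff_imp]
  intro h
  exact ⟨by linarith [h.2.1], by linarith [h.1]⟩

theorem mem_chordsEndingIn {k j : ℤ} {q : ℤ × ℤ} :
    q ∈ chordsEndingIn X k j ↔ k < q.2 ∧ q.2 ≤ j ∧ IsChord X q.1 q.2 := by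
  obtain ⟨x, v⟩ := q
  simp [chordsEndingIn, mem_chordStarts, and_assoc]

theorem mem_chordsIn {u v : ℤ} {q : ℤ × ℤ} :
    q ∈ chordsIn X u v ↔ u ≤ q.1 ∧ q.2 ≤ v ∧ IsChord X q.1 q.2 := by
  rw [chordsIn, mem_filter, mem_chordsEndingIn]
  constructor
  · rintro ⟨⟨-, hv, hq⟩, hu⟩
    exact ⟨hu, hv, hq⟩
  · rintro ⟨hu, hv, hq⟩
    exact ⟨⟨by linarith [hq.1], hv, hq⟩, hu⟩

theorem card_chordsEndingIn (k j : ℤ) :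
    #(chordsEndingIn X k j) = ∑ m ∈ Ioc k j, #(chordStarts X m) := by
  rw [chordsEndingIn, card_biUnion]
  · exact sum_congr rfl fun m _ => card_image_of_injective _ (Prod.mk_left_injective m)
  · intro m₁ _ m₂ _ hm
    simp only [Function.onFun, disjoint_left, mem_image]
    rintro _ ⟨x₁, -, rfl⟩ ⟨x₂, -, h⟩
    exact hm (congrArg Prod.snd h).symm

theorem chordsIn_eq_empty {u v : ℤ} (h : v ≤ u + 1) : chordsIn X u v = ∅ := by
  ext q
  simp only [mem_chordsIn, notMem_empty, iff_false]
  rintro ⟨hu, hv, hq⟩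
  linarith [hq.1]

theorem chordsIn_mono {u v v' : ℤ} (h : v ≤ v') : chordsIn X u v ⊆ chordsIn X u v' := by
  intro q
  simp only [mem_chordsIn]
  exact fun ⟨hu, hv, hq⟩ => ⟨hu, hv.trans h, hq⟩

theorem chordsIn_eq_insert {u m v : ℤ} (hum : u < m) (hmv : m < v) (huv : IsChord X u v)
    (hcross : ∀ y w, IsChord X y w → u ≤ y → y < m → m < w → w ≤ v → y = u ∧ w = v) :
    chordsIn X u v = insert (u, v) (chordsIn X u m ∪ chordsIn X m v) := by
  ext ⟨x, w⟩
  simp only [mem_insert, mem_union, mem_chordsIn, Prod.mk.injEq]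
  constructor
  · rintro ⟨hx, hw, hxw⟩
    by_cases hwm : w ≤ m
    · exact Or.inr (Or.inl ⟨hx, hwm, hxw⟩)
    by_cases hxm : m ≤ x
    · exact Or.inr (Or.inr ⟨hxm, hw, hxw⟩)
    exact Or.inl (hcross x w hxw hx (by omega) (by omega) hw)
  · rintro (⟨rfl, rfl⟩ | ⟨hx, hw, hxw⟩ | ⟨hx, hw, hxw⟩)
    · exact ⟨le_rfl, le_rfl, huv⟩
    · exact ⟨hx, by omega, hxw⟩
    · exact ⟨by omega, hw, hxw⟩

/-- The apex `m` of the triangle on the chord `(u, v)` splits the chords under `(u, v)`. -/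
theorem IsTriangulation.exists_apex (hX : IsTriangulation n X) {u v : ℤ}
    (huv : IsChord X u v) :
    ∃ m, u < m ∧ m < v ∧ IsSide X u m ∧ IsSide X m v ∧
      chordsIn X u v = insert (u, v) (chordsIn X u m ∪ chordsIn X m v) := by
  have ⟨h2, hn, _⟩ := huv
  obtain ⟨m, hm, hmax⟩ := ((Ioo u v).filter (IsSide X u)).exists_max_image id
    ⟨u + 1, by simp [IsSide]; omega⟩
  simp only [mem_filter, mem_Ioo, id] at hm hmax
  obtain ⟨⟨hum, hmv⟩, hside⟩ := hm
  have hcross : ∀ y w, IsChord X y w → u ≤ y → y < m → m < w → w ≤ v → y = u ∧ w = v := by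
    intro y w hyw hyu hy hw hwv
    rcases hyu.eq_or_lt with rfl | hyu
    · refine ⟨rfl, by_contra fun hwv' => ?_⟩
      linarith [hmax w ⟨⟨by omega, by omega⟩, Or.inl hyw⟩]
    · rcases hside with hum' | rfl
      · exact absurd ⟨hyu, hy, hw⟩ (hum'.not_cross hX.1 hyw)
      · omega
  refine ⟨m, hum, hmv, hside, ?_, chordsIn_eq_insert hum hmv huv hcross⟩
  by_cases hmv' : v = m + 1
  · exact Or.inr hmv'
  refine Or.inl (hX.isChord (by omega) (by omega) (fun y w hyw => ⟨?_, ?_⟩) ?_)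
  · exact fun ⟨h1, h2, h3⟩ => huv.not_cross hX.1 hyw ⟨by omega, h2, h3⟩
  · rintro ⟨h1, h2, h3⟩
    rcases lt_or_ge y u with hyu | hyu
    · exact hyw.not_cross hX.1 huv ⟨hyu, by omega, h3⟩
    · have := hcross y w hyw hyu h1 h2 h3.le
      omega
  · exact fun y hy ⟨h1, h2⟩ => huv.not_between_of_isRay hX.1 hy ⟨by omega, h2⟩

theorem IsTriangulation.card_chordsIn (hX : IsTriangulation n X) {u v : ℤ} (h : IsSide X u v) :
    (#(chordsIn X u v) : ℤ) = v - u - 1 := by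
  induction hd : (v - u).toNat using Nat.strong_induction_on generalizing u v with
  | _ d ih =>
  rcases h with huv | rfl
  · obtain ⟨m, hum, hmv, hl, hr, hsplit⟩ := hX.exists_apex huv
    have hdisj : Disjoint (chordsIn X u m) (chordsIn X m v) := by
      refine disjoint_left.2 fun q h₁ h₂ => ?_
      rw [mem_chordsIn] at h₁ h₂
      linarith [h₁.2.2.1, h₁.2.1, h₂.1]
    have hnot : (u, v) ∉ chordsIn X u m ∪ chordsIn X m v := by
      simp only [mem_union, mem_chordsIn]
      omega
    rw [hsplit, card_insert_of_notMem hnot, card_union_of_disjoint hdisj]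
    push_cast
    rw [ih _ (by omega) hl rfl, ih _ (by omega) hr rfl]
    ring
  · simp [chordsIn_eq_empty]

theorem IsTriangulation.card_chordsIn_le (hX : IsTriangulation n X) {u v p : ℤ}
    (huv : IsChord X u v) (hup : u < p) (hpv : p < v) : (#(chordsIn X u p) : ℤ) ≤ p - u - 1 := by
  induction hd : (v - u).toNat using Nat.strong_induction_on generalizing u v with
  | _ d ih =>
  have := huv.1
  obtain ⟨m, hum, hmv, hl, hr, hsplit⟩ := hX.exists_apex huv
  rcases lt_trichotomy p m with hpm | rfl | hpm
  · rcases hl with hl | rfl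
    · exact ih _ (by omega) hl hup hpm rfl
    · omega
  · exact (hX.card_chordsIn hl).le
  · rcases hr with hr | rfl
    · have hsub : chordsIn X u p ⊆ chordsIn X u m ∪ chordsIn X m p := by
        intro q hq
        have hqv := chordsIn_mono hpv.le hq
        rw [hsplit, mem_insert, mem_union] at hqv
        rw [mem_chordsIn] at hq
        rw [mem_union]
        rcases hqv with rfl | hq' | hq'
        · exact absurd hq.2.1 (not_le.2 hpv)
        · exact Or.inl hq'
        · rw [mem_chordsIn] at hq'
          exact Or.inr (mem_chordsIn.2 ⟨hq'.1, hq.2.1, hq'.2.2⟩)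
      calc (#(chordsIn X u p) : ℤ) ≤ #(chordsIn X u m) + #(chordsIn X m p) := by
            exact_mod_cast (card_le_card hsub).trans (card_union_le _ _)
        _ ≤ (m - u - 1) + (p - m - 1) :=
            add_le_add (hX.card_chordsIn hl).le (ih _ (by omega) hr hpm hpv rfl)
        _ ≤ p - u - 1 := by linarith
    · omega

theorem sep_terminal_intCast_eq (hX : ∀ a ∈ X, a.IsAdmissible) (m : ℤ) :
    {a ∈ X | a.terminal = m} =
      ↑((chordStarts X m).image (fun x : ℤ => Arc.inner (x : ZMod n) (m - x).toNat) ∪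
        if IsRay X m then {Arc.proj (m : ZMod n)} else ∅) := by
  ext a
  cases a with
  | inner i t =>
    simp only [Set.mem_sep_iff, Arc.terminal, coe_union, coe_image, Set.mem_union,
      Set.mem_image, mem_coe, mem_chordStarts, Arc.inner.injEq]
    constructor
    · rintro ⟨ha, hterm⟩
      have hi : ((m - t : ℤ) : ZMod n) = i := by push_cast; rw [← hterm]; ring
      have := isChord_of_mem hX ha hi
      rw [sub_add_cancel] at this
      exact Or.inl ⟨m - t, this, hi, by omega⟩
    · rintro (⟨x, hx, rfl, rfl⟩ | h)
      · refine ⟨hx.2.2, ?_⟩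
        rw [← Int.cast_natCast, Int.toNat_of_nonneg (by linarith [hx.1])]
        push_cast
        ring
      · split_ifs at h <;> simp at h
  | proj j =>
    simp only [Set.mem_sep_iff, Arc.terminal, coe_union, coe_image, Set.mem_union,
      Set.mem_image, reduceCtorEq, and_false, exists_false, false_or]
    split_ifs with hm
    · simp only [coe_singleton, Set.mem_singleton_iff, Arc.proj.injEq]
      exact ⟨fun h => h.2, by rintro rfl; exact ⟨hm, rfl⟩⟩
    · simp only [coe_empty, Set.mem_empty_iff_false, iff_false, not_and]
      rintro hj rfl
      exact hm hj

theorem topSeq_intCast (hX : ∀ a ∈ X, a.IsAdmissible) (m : ℤ) :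
    topSeq n X m = #(chordStarts X m) + if IsRay X m then 1 else 0 := by
  have hinj : Set.InjOn (fun x : ℤ => Arc.inner (x : ZMod n) (m - x).toNat) (chordStarts X m) := by
    intro x₁ h₁ x₂ h₂ h
    simp only [mem_coe, mem_chordStarts, Arc.inner.injEq] at h₁ h₂ h
    have := h₁.1
    have := h₂.1
    omega
  rw [topSeq, sep_terminal_intCast_eq hX, Set.ncard_coe_finset,
    card_union_of_disjoint (by split_ifs <;> simp), card_image_of_injOn hinj]
  split_ifs <;> simp

noncomputable def sumIoc (a : ZMod n → ℕ) (k j : ℤ) : ℤ := ∑ m ∈ Ioc k j, (a m : ℤ)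

theorem sumIoc_add (a : ZMod n → ℕ) {k p j : ℤ} (hkp : k ≤ p) (hpj : p ≤ j) :
    sumIoc a k p + sumIoc a p j = sumIoc a k j := by
  rw [sumIoc, sumIoc, sumIoc, ← sum_union (Ioc_disjoint_Ioc_of_le le_rfl),
    Ioc_union_Ioc_eq_Ioc hkp hpj]

noncomputable def raysIn (X : Set (Arc n)) (k j : ℤ) : Finset ℤ := (Ioc k j).filter (IsRay X)

theorem sumIoc_topSeq (hX : ∀ a ∈ X, a.IsAdmissible) (k j : ℤ) :
    sumIoc (topSeq n X) k j = #(chordsEndingIn X k j) + #(raysIn X k j) := by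
  simp only [sumIoc, topSeq_intCast hX, card_chordsEndingIn, raysIn, card_filter]
  push_cast
  rw [sum_add_distrib]

theorem IsChord.sumIoc_eq_card_chordsIn (hX : PairwiseCompatible n X) {x v p : ℤ}
    (hxv : IsChord X x v) (hpv : p < v) : sumIoc (topSeq n X) x p = #(chordsIn X x p) := by
  have hrays : raysIn X x p = ∅ :=
    filter_false_of_mem fun y hy hray => hxv.not_between_of_isRay hX hray
      ⟨(mem_Ioc.1 hy).1, (mem_Ioc.1 hy).2.trans_lt hpv⟩
  have hchords : chordsIn X x p = chordsEndingIn X x p := by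
    refine filter_true_of_mem fun q hq => ?_
    rw [mem_chordsEndingIn] at hq
    by_contra hqx
    exact hq.2.2.not_cross hX hxv ⟨not_le.1 hqx, hq.1, hq.2.1.trans_lt hpv⟩
  rw [sumIoc_topSeq hX.1, hrays, hchords, card_empty, Nat.cast_zero, add_zero]

theorem IsExposed.chordsIn_eq {k : ℤ} (hk : IsExposed X k) (j : ℤ) :
    chordsIn X k j = chordsEndingIn X k j := by
  refine filter_true_of_mem fun q hq => ?_
  rw [mem_chordsEndingIn] at hq
  by_contra hqk
  exact hk _ _ hq.2.2 ⟨not_le.1 hqk, hq.1⟩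

theorem IsTriangulation.sumIoc_eq_of_isSide (hX : IsTriangulation n X) {y j : ℤ}
    (hy : IsExposed X y) (hj : IsExposed X j) (hyj : IsSide X y j)
    (hno : ∀ z, y < z → z < j → ¬IsExposed X z) : sumIoc (topSeq n X) y j = j - y := by
  have hlt : y < j := by rcases hyj with h | h <;> [linarith [h.1]; omega]
  have hrays : raysIn X y j = {j} := by
    ext z
    simp only [raysIn, mem_filter, mem_Ioc, mem_singleton]
    constructor
    · rintro ⟨⟨h₁, h₂⟩, hz⟩
      by_contra hzj
      exact hno z h₁ (lt_of_le_of_ne h₂ hzj) (hz.isExposed hX.1)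
    · rintro rfl
      exact ⟨⟨hlt, le_rfl⟩, hX.isRay hj⟩
  rw [sumIoc_topSeq hX.1.1, ← hy.chordsIn_eq, hrays, card_singleton, hX.card_chordsIn hyj]
  ring

theorem IsTriangulation.exists_isSide_of_isExposed (hX : IsTriangulation n X) (hn : 0 < n)
    {j : ℤ} (hj : IsExposed X j) :
    ∃ y < j, IsExposed X y ∧ IsSide X y j ∧ ∀ z, y < z → z < j → ¬IsExposed X z := by
  have hjn : IsExposed X (j - n) := by simpa [sub_eq_add_neg] using hj.add_mul (-1)
  obtain ⟨y, hy, hmax⟩ := ((Icc (j - n) (j - 1)).filter (IsExposed X)).exists_max_image id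
    ⟨j - n, mem_filter.2 ⟨mem_Icc.2 ⟨le_rfl, by omega⟩, hjn⟩⟩
  simp only [mem_filter, mem_Icc, id] at hy hmax
  obtain ⟨⟨hjy, hyj⟩, hy⟩ := hy
  have hno : ∀ z, y < z → z < j → ¬IsExposed X z :=
    fun z hyz hzj hz => not_lt.2 (hmax z ⟨⟨by omega, by omega⟩, hz⟩) hyz
  refine ⟨y, by omega, hy, ?_, hno⟩
  by_cases hj1 : j = y + 1
  · exact Or.inr hj1
  refine Or.inl (hX.isChord (by omega) (by omega) (fun x w hxw => ⟨?_, ?_⟩) ?_)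
  · exact fun ⟨_, h₂, h₃⟩ => hj _ _ hxw ⟨h₂, h₃⟩
  · exact fun ⟨h₁, h₂, _⟩ => hy _ _ hxw ⟨h₁, h₂⟩
  · exact fun z hz ⟨h₁, h₂⟩ => hno z h₁ h₂ (hz.isExposed hX.1)

theorem IsTriangulation.le_sumIoc (hX : IsTriangulation n X) (hn : 0 < n) {k j : ℤ}
    (hj : IsExposed X j) (hkj : k < j) : j - k ≤ sumIoc (topSeq n X) k j := by
  induction hd : (j - k).toNat using Nat.strong_induction_on generalizing j with
  | _ d ih =>
  obtain ⟨y, hyj, hy, hside, hno⟩ := hX.exists_isSide_of_isExposed hn hj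
  have hblock := hX.sumIoc_eq_of_isSide hy hj hside hno
  rcases lt_trichotomy k y with hky | rfl | hyk
  · have := ih _ (by omega) hy hky rfl
    rw [← sumIoc_add _ hky.le hyj.le]
    linarith
  · exact hblock.ge
  · rcases hside with hside | rfl
    · rw [← sumIoc_add _ hyk.le hkj.le, hside.sumIoc_eq_card_chordsIn hX.1 hkj] at hblock
      linarith [hX.card_chordsIn_le hside hyk hkj]
    · omega

theorem IsTriangulation.exists_sumIoc_lt (hX : IsTriangulation n X) {j : ℤ}
    (hj : ¬IsExposed X j) : ∃ k < j, sumIoc (topSeq n X) k j < j - k := by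
  simp only [IsExposed, not_forall, not_not] at hj
  obtain ⟨x, v, hxv, hxj, hjv⟩ := hj
  refine ⟨x, hxj, ?_⟩
  rw [hxv.sumIoc_eq_card_chordsIn hX.1 hjv]
  linarith [hX.card_chordsIn_le hxv hxj hjv]

theorem IsTriangulation.isRay_iff (hX : IsTriangulation n X) (hn : 0 < n) {y : ℤ} :
    IsRay X y ↔ ∀ k < y, y - k ≤ sumIoc (topSeq n X) k y := by
  refine ⟨fun hy k hk => hX.le_sumIoc hn (hy.isExposed hX.1) hk, fun h => hX.isRay ?_⟩
  by_contra hy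
  obtain ⟨k, hk, hlt⟩ := hX.exists_sumIoc_lt hy
  linarith [h k hk]

theorem IsTriangulation.sumIoc_of_isChord (hX : IsTriangulation n X) {x j : ℤ}
    (hxj : IsChord X x j) :
    sumIoc (topSeq n X) x (j - 1) = j - 1 - x - #((chordStarts X j).filter (x ≤ ·)) := by
  have hsplit : chordsIn X x j =
      chordsIn X x (j - 1) ∪ ((chordStarts X j).filter (x ≤ ·)).image (·, j) := by
    ext ⟨z, w⟩
    simp only [mem_union, mem_image, mem_filter, mem_chordStarts, mem_chordsIn, Prod.mk.injEq]
    constructor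
    · rintro ⟨hz, hw, hzw⟩
      rcases hw.lt_or_eq with hw | rfl
      · exact Or.inl ⟨hz, by omega, hzw⟩
      · exact Or.inr ⟨z, ⟨hzw, hz⟩, rfl, rfl⟩
    · rintro (⟨hz, hw, hzw⟩ | ⟨z, ⟨hzj, hz⟩, rfl, rfl⟩)
      exacts [⟨hz, by omega, hzw⟩, ⟨hz, le_rfl, hzj⟩]
  have hdisj : Disjoint (chordsIn X x (j - 1))
      (((chordStarts X j).filter (x ≤ ·)).image (·, j)) := by
    refine disjoint_left.2 fun q hq hq' => ?_
    obtain ⟨z, -, rfl⟩ := mem_image.1 hq'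
    have := (mem_chordsIn.1 hq).2.1
    omega
  have hcard := hX.card_chordsIn (Or.inl hxj)
  rw [hsplit, card_union_of_disjoint hdisj, card_image_of_injective _ (Prod.mk_left_injective j)]
    at hcard
  rw [hxj.sumIoc_eq_card_chordsIn hX.1 (by omega)]
  push_cast at hcard
  linarith

theorem IsTriangulation.lt_sumIoc_of_isChord (hX : IsTriangulation n X) {x j k : ℤ}
    (hxj : IsChord X x j) (hxk : x < k) (hkj : k < j - 1) :
    j - 1 - k - #((chordStarts X j).filter (x ≤ ·)) < sumIoc (topSeq n X) k (j - 1) := by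
  have h := hX.sumIoc_of_isChord hxj
  rw [← sumIoc_add _ hxk.le hkj.le, hxj.sumIoc_eq_card_chordsIn hX.1 (by omega)] at h
  linarith [hX.card_chordsIn_le hxj hxk (by omega)]

theorem exists_card_filter_le_eq {α : Type*} [LinearOrder α] (s : Finset α) {r : ℕ}
    (h₁ : 1 ≤ r) (h₂ : r ≤ #s) : ∃ z ∈ s, #(s.filter (z ≤ ·)) = r := by
  have hanti : StrictAntiOn (fun z => #(s.filter (z ≤ ·))) s := by
    intro z₁ hz₁ z₂ _ hlt
    refine card_lt_card ((ssubset_iff_of_subset fun w hw => ?_).2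
      ⟨z₁, mem_filter.2 ⟨hz₁, le_rfl⟩, fun h => (mem_filter.1 h).2.not_gt hlt⟩)
    exact mem_filter.2 ⟨(mem_filter.1 hw).1, hlt.le.trans (mem_filter.1 hw).2⟩
  have himage : s.image (fun z => #(s.filter (z ≤ ·))) = Icc 1 #s := by
    refine eq_of_subset_of_card_le (fun r hr => ?_) ?_
    · obtain ⟨z, hz, rfl⟩ := mem_image.1 hr
      exact mem_Icc.2 ⟨card_pos.2 ⟨z, mem_filter.2 ⟨hz, le_rfl⟩⟩, card_filter_le _ _⟩
    · rw [Nat.card_Icc, card_image_of_injOn hanti.injOn]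
      omega
  exact mem_image.1 (himage ▸ mem_Icc.2 ⟨h₁, h₂⟩)

theorem IsTriangulation.le_of_isChord {X' : Set (Arc n)} (hX : IsTriangulation n X)
    (hX' : IsTriangulation n X') (h : topSeq n X = topSeq n X') {x z j : ℤ}
    (hx : IsChord X x j) (hz : IsChord X' z j)
    (hs : #((chordStarts X j).filter (x ≤ ·)) = #((chordStarts X' j).filter (z ≤ ·))) :
    z ≤ x := by
  by_contra hxz
  have h₁ := hX.lt_sumIoc_of_isChord hx (not_le.1 hxz) (by linarith [hz.1])
  rw [h, hX'.sumIoc_of_isChord hz, hs] at h₁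
  exact lt_irrefl _ h₁

theorem IsTriangulation.subset_of_topSeq_eq {X' : Set (Arc n)} (hn : 0 < n)
    (hX : IsTriangulation n X) (hX' : IsTriangulation n X') (h : topSeq n X = topSeq n X') :
    X ⊆ X' := by
  have hray : ∀ y, IsRay X y ↔ IsRay X' y := fun y => by
    rw [hX.isRay_iff hn, hX'.isRay_iff hn, h]
  intro a ha
  cases a with
  | proj j =>
    obtain ⟨y, rfl⟩ := ZMod.intCast_surjective j
    exact (hray y).1 ha
  | inner i t =>
    obtain ⟨x, rfl⟩ := ZMod.intCast_surjective i
    have hx := isChord_of_mem hX.1.1 ha rfl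
    have hcard : #(chordStarts X (x + t)) = #(chordStarts X' (x + t)) := by
      have h₁ := topSeq_intCast hX.1.1 (x + t)
      rw [h, topSeq_intCast hX'.1.1, hray] at h₁
      omega
    -- `z` is the start of the chord of `X'` ending at `x + t` that has the same rank as `x`
    obtain ⟨z, hz, hs⟩ := exists_card_filter_le_eq (chordStarts X' (x + t))
      (card_pos.2 ⟨x, mem_filter.2 ⟨mem_chordStarts.2 hx, le_rfl⟩⟩)
      (hcard ▸ card_filter_le _ _)
    rw [mem_chordStarts] at hz
    obtain rfl : z = x := le_antisymm (hX.le_of_isChord hX' h hx hz hs.symm)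
      (hX'.le_of_isChord hX h.symm hz hx hs)
    simpa using hz.2.2

/-- The map `X ↦ top(X)` is injective on triangulations of the punctured
`n`-gon: if `X, X' ∈ 𝒯(n)` satisfy `top(X) = top(X')`, then `X = X'`. -/
theorem top_injective_on_triangulations (n : ℕ) (hn : 0 < n)
    (X X' : Set (Arc n)) (hX : IsTriangulation n X) (hX' : IsTriangulation n X')
    (h : topSeq n X = topSeq n X') : X = X' :=
  (hX.subset_of_topSeq_eq hn hX' h).antisymm (hX'.subset_of_topSeq_eq hn hX h.symm)

end Punctured
end

section
/- Let n be a positive integer and a ∈ 𝒵(n). Define X_a to be the set of admissible arcs consisting of: (i) the projective arc at the residue class of j, for each j ∈ {1, …, n} with a'_j = ‖a'‖; and (ii) for each l ∈ {1, …, n} and each s ∈ {1, …, a_l − δ_l}, the inner arc (k_s^l mod n, l − k_s^l). Then X_a is a triangulation of the punctured n-gon and top(X_a) = a. -/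
/-!
Combinatorial model of admissible arcs and triangulations of a regular
`n`-gon with one puncture (following Adachi, "The classification of
τ-tilting modules over Nakayama algebras").
-/

namespace Punctured

/-- The candidate triangulation `X_a` associated to a sequence `a ∈ 𝒵(n)`:
it consists of the projective arcs at (the residue classes of) those
`j ∈ {1, …, n}` with `a'_j = ‖a'‖`, together with, for each `l ∈ {1, …, n}`
and each `s ∈ {1, …, a_l − δ_l}`, the inner arc `(k_s^l mod n, l − k_s^l)`. -/
noncomputable def Xa (n : ℕ) (a : ZMod n → ℕ) : Set (Arc n) :=
  {arc | (∃ j ∈ Finset.Icc 1 n, psum n a (j : ℤ) = pnorm n a ∧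
            arc = Arc.proj ((j : ℕ) : ZMod n)) ∨
    (∃ l ∈ Finset.Icc 1 n, ∃ s : ℤ, 1 ≤ s ∧
        s ≤ (a ((l : ℕ) : ZMod n) : ℤ) - deltaInt n a (l : ℤ) ∧
        arc = Arc.inner ((kmax n a (l : ℤ) s : ℤ) : ZMod n)
          ((l : ℤ) - kmax n a (l : ℤ) s).toNat)}

/-!
Write `f = psum n a` for the periodic partial-sum sequence `a'`. Since
`f p = f (p - 1) + a_p - 1` with `a_p ≥ 0`, `f` drops by at most one per step, so it satisfies a
discrete intermediate value theorem. An inner arc with integer lift `[i, l]` belongs to `X_a`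
exactly when `f < f i` strictly inside `(i, l)` and `f i ≤ f l + 1 - δ_l`; it is then the arc
`(k_s^l, l)` with `s = f i - f (l - 1)`. Projective arcs sit at the maxima of `f`. Two such
intervals cannot cross, and none contains a maximum of `f` in its interior, so `X_a` is
compatible. Conversely, if an admissible arc compatible with all of `X_a` violated one of the two
conditions, the intermediate value theorem would produce an arc of `X_a` crossing it. Finally the
arcs of `X_a` ending at `l` are the `a_l - δ_l` arcs `(k_s^l, l)`, together with the projective
arc at `l` when `δ_l = 1`, hence `top(X_a) = a`.
-/

section Periodicity

variable {n : ℕ} {a : ZMod n → ℕ}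

lemma one_le_resRep (n : ℕ) (p : ℤ) : 1 ≤ resRep n p := Nat.le_add_left 1 _

lemma resRep_le (hn : 0 < n) (p : ℤ) : resRep n p ≤ n := by
  have := Int.emod_lt_of_pos (p - 1) (Int.natCast_pos.2 hn)
  unfold resRep
  omega

lemma resRep_eq_of_mem_Icc {p : ℤ} (h1 : 1 ≤ p) (h2 : p ≤ n) :
    (resRep n p : ℤ) = p := by
  have : (p - 1) % (n : ℤ) = p - 1 := Int.emod_eq_of_lt (by omega) (by omega)
  unfold resRep
  omega

lemma natCast_resRep (hn : 0 < n) (p : ℤ) : ((resRep n p : ℕ) : ZMod n) = (p : ZMod n) := by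
  have := Int.emod_nonneg (p - 1) (Int.natCast_ne_zero.2 hn.ne')
  have h : (resRep n p : ℤ) = (p - 1) % n + 1 := by unfold resRep; omega
  rw [← Int.cast_natCast, h]
  push_cast [ZMod.intCast_mod]
  ring

lemma resRep_congr {p q : ℤ} (h : (p : ZMod n) = q) : resRep n p = resRep n q := by
  have : (p - 1) % (n : ℤ) = (q - 1) % n := ((ZMod.intCast_eq_intCast_iff _ _ _).1 h).sub_right 1
  rw [resRep, this, resRep]

lemma psum_congr {p q : ℤ} (h : (p : ZMod n) = q) : psum n a p = psum n a q := by
  rw [psum, resRep_congr h, psum]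

lemma psum_add_mul (p c : ℤ) : psum n a (p + c * n) = psum n a p :=
  psum_congr (by simp)

lemma psum_natCast (hn : 0 < n) (ha : ∑ p ∈ Finset.Icc 1 n, a ((p : ℕ) : ZMod n) = n)
    {i : ℕ} (hi : i ≤ n) : psum n a i = ∑ j ∈ Finset.Icc 1 i, ((a j : ℤ) - 1) := by
  rcases Nat.eq_zero_or_pos i with rfl | hi0
  · -- `a'_0 = a'_n = Σ_{j=1}^n (a_j - 1)`, which vanishes since `a ∈ 𝒵(n)`
    have : resRep n 0 = n := by
      rw [resRep_congr (q := n) (by simp)]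
      exact_mod_cast resRep_eq_of_mem_Icc (by omega) le_rfl
    simp [psum, this, Finset.sum_sub_distrib, ← Nat.cast_sum, ha]
  · have := resRep_eq_of_mem_Icc (n := n) (p := i) (by omega) (by omega)
    rw [psum]
    congr 2
    omega

lemma psum_step (hn : 0 < n) (ha : ∑ p ∈ Finset.Icc 1 n, a ((p : ℕ) : ZMod n) = n) (p : ℤ) :
    psum n a p = psum n a (p - 1) + ((a (p : ZMod n) : ℤ) - 1) := by
  obtain ⟨r, hr, hrp⟩ : ∃ r : ℕ, r + 1 ≤ n ∧ (((r + 1 : ℕ) : ℤ) : ZMod n) = p :=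
    ⟨resRep n p - 1, by have := resRep_le hn p; omega, by
      simpa [Nat.sub_add_cancel (one_le_resRep n p)] using natCast_resRep hn p⟩
  have hrp' : ((r : ℤ) : ZMod n) = ((p - 1 : ℤ) : ZMod n) := by
    push_cast at hrp ⊢
    rw [← hrp, add_sub_cancel_right]
  rw [← psum_congr hrp, ← psum_congr hrp', ← hrp, psum_natCast hn ha hr,
    psum_natCast hn ha (by omega), Finset.sum_Icc_succ_top le_add_self]
  simp

lemma psum_sub_one_le (hn : 0 < n) (ha : ∑ p ∈ Finset.Icc 1 n, a ((p : ℕ) : ZMod n) = n)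
    (p : ℤ) : psum n a (p - 1) ≤ psum n a p + 1 := by
  linarith [psum_step hn ha p, (a (p : ZMod n)).cast_nonneg (α := ℤ)]

end Periodicity

section Maximum

variable {n : ℕ} {a : ZMod n → ℕ}

lemma psum_le_pnorm (hn : 0 < n) (a : ZMod n → ℕ) (p : ℤ) : psum n a p ≤ pnorm n a :=
  le_csSup ((Set.finite_Icc 1 n).image _).bddAbove
    ⟨resRep n p, ⟨one_le_resRep n p, resRep_le hn p⟩,
      psum_congr (by simpa using natCast_resRep hn p)⟩

lemma exists_mem_Ico_psum_eq_pnorm (hn : 0 < n) (a : ZMod n → ℕ) (x : ℤ) :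
    ∃ q ∈ Set.Ico x (x + n), psum n a q = pnorm n a := by
  obtain ⟨j, -, hj⟩ : pnorm n a ∈ (fun i : ℕ => psum n a (i : ℤ)) '' Set.Icc 1 n :=
    Set.Nonempty.csSup_mem ⟨_, 1, ⟨le_rfl, hn⟩, rfl⟩ ((Set.finite_Icc 1 n).image _)
  refine ⟨x + (j - x) % n, ⟨?_, ?_⟩, (psum_congr ?_).trans hj⟩
  · linarith [Int.emod_nonneg (j - x) (Int.natCast_ne_zero.2 hn.ne')]
  · linarith [Int.emod_lt_of_pos (j - x) (Int.natCast_pos.2 hn)]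
  · push_cast [ZMod.intCast_mod]
    ring

lemma deltaInt_nonneg (n : ℕ) (a : ZMod n → ℕ) (p : ℤ) : 0 ≤ deltaInt n a p := by
  unfold deltaInt; split_ifs <;> norm_num

lemma deltaInt_of_eq {p : ℤ} (h : psum n a p = pnorm n a) : deltaInt n a p = 1 := if_pos h

lemma deltaInt_of_ne {p : ℤ} (h : psum n a p ≠ pnorm n a) : deltaInt n a p = 0 := if_neg h

lemma psum_add_one_sub_deltaInt_le (hn : 0 < n) (p : ℤ) :
    psum n a p + 1 - deltaInt n a p ≤ pnorm n a := by
  have := psum_le_pnorm hn a p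
  unfold deltaInt; split_ifs <;> omega

lemma deltaInt_le (hn : 0 < n) (ha : ∑ p ∈ Finset.Icc 1 n, a ((p : ℕ) : ZMod n) = n) (p : ℤ) :
    deltaInt n a p ≤ a (p : ZMod n) := by
  have := psum_step hn ha p
  have := psum_le_pnorm hn a (p - 1)
  unfold deltaInt; split_ifs <;> omega

end Maximum

section DiscreteIVT

variable {g : ℤ → ℤ}

lemma exists_last_apply_eq (hg : ∀ m, g (m - 1) ≤ g m + 1) {v lo hi : ℤ} (hle : lo ≤ hi)
    (hlo : v ≤ g lo) (hhi : g hi < v) :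
    ∃ k, lo ≤ k ∧ k < hi ∧ g k = v ∧ ∀ m, k < m → m ≤ hi → g m < v := by
  classical
  obtain ⟨k, ⟨hlok, hkhi, hvk⟩, hmax⟩ :=
    Int.exists_greatest_of_bdd (P := fun k => lo ≤ k ∧ k ≤ hi ∧ v ≤ g k)
      ⟨hi, fun _ h => h.2.1⟩ ⟨lo, le_rfl, hle, hlo⟩
  have hafter : ∀ m, k < m → m ≤ hi → g m < v := fun m hkm hmhi => by
    by_contra! h
    linarith [hmax m ⟨by omega, hmhi, h⟩]
  have hkhi : k < hi := lt_of_le_of_ne hkhi fun h => by rw [h] at hvk; omega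
  have := hg (k + 1)
  rw [add_sub_cancel_right] at this
  have := hafter (k + 1) (by omega) (by omega)
  exact ⟨k, hlok, hkhi, by omega, hafter⟩

lemma exists_first_le_apply {v p q : ℤ} (hpq : p < q) (hq : v ≤ g q) :
    ∃ l, p < l ∧ l ≤ q ∧ v ≤ g l ∧ ∀ m, p < m → m < l → g m < v := by
  classical
  obtain ⟨l, ⟨hpl, hvl⟩, hmin⟩ := Int.exists_least_of_bdd (P := fun l => p < l ∧ v ≤ g l)
    ⟨p, fun _ h => h.1.le⟩ ⟨q, hpq, hq⟩
  exact ⟨l, hpl, hmin q ⟨hpq, hq⟩, hvl, fun m hpm hml => by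
    by_contra! h
    linarith [hmin m ⟨hpm, h⟩]⟩

end DiscreteIVT

section Kmax

variable {n : ℕ} {a : ZMod n → ℕ} {l s : ℤ}

lemma le_kmax {m : ℤ} (hm : m < l - 1) (h : psum n a m = psum n a (l - 1) + s) :
    m ≤ kmax n a l s :=
  le_csSup ⟨l - 1, fun _ hk => hk.1.le⟩ ⟨hm, h⟩

lemma kmax_spec (hn : 0 < n) (ha : ∑ p ∈ Finset.Icc 1 n, a ((p : ℕ) : ZMod n) = n)
    (hs1 : 1 ≤ s) (hs2 : s ≤ (a (l : ZMod n) : ℤ) - deltaInt n a l) :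
    kmax n a l s < l - 1 ∧ psum n a (kmax n a l s) = psum n a (l - 1) + s := by
  obtain ⟨q, ⟨-, hql⟩, hq⟩ := exists_mem_Ico_psum_eq_pnorm hn a (l - 1 - n)
  have := psum_step hn ha l
  have := psum_add_one_sub_deltaInt_le hn (a := a) l
  obtain ⟨k, -, hkl, hk, -⟩ := exists_last_apply_eq (psum_sub_one_le hn ha)
    (v := psum n a (l - 1) + s) (by omega : q ≤ l - 1) (by omega) (by omega)
  exact Int.csSup_mem (s := {k | k < l - 1 ∧ psum n a k = psum n a (l - 1) + s}) ⟨k, hkl, hk⟩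
    ⟨l - 1, fun _ hk => hk.1.le⟩

lemma psum_lt_of_kmax_lt (hn : 0 < n) (ha : ∑ p ∈ Finset.Icc 1 n, a ((p : ℕ) : ZMod n) = n)
    (hs1 : 1 ≤ s) {m : ℤ} (hkm : kmax n a l s < m) (hml : m < l) :
    psum n a m < psum n a (l - 1) + s := by
  rcases (show m ≤ l - 1 by omega).lt_or_eq with hm | rfl
  · by_contra! h
    obtain ⟨k, hmk, hkl, hk, -⟩ := exists_last_apply_eq (psum_sub_one_le hn ha) hm.le h (by omega)
    linarith [le_kmax hkl hk]
  · omega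

end Kmax

def Arc.ofInt {n : ℕ} (i l : ℤ) : Arc n := .inner (i : ZMod n) (l - i).toNat

lemma Arc.ofInt_add_mul {n : ℕ} (i l c : ℤ) :
    (Arc.ofInt (i + c * n) (l + c * n) : Arc n) = Arc.ofInt i l := by
  simp [Arc.ofInt]

lemma Arc.terminal_ofInt {n : ℕ} {i l : ℤ} (h : i ≤ l) :
    (Arc.ofInt i l : Arc n).terminal = l := by
  simp [Arc.ofInt, Arc.terminal, h]

/-- The integer lifts `[i, l]` of the inner arcs of `X_a`, described intrinsically
(see `mem_Xa_iff`). -/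
structure IsXaSpan (n : ℕ) (a : ZMod n → ℕ) (i l : ℤ) : Prop where
  add_two_le : i + 2 ≤ l
  psum_lt : ∀ m, i < m → m < l → psum n a m < psum n a i
  psum_le : psum n a i ≤ psum n a l + 1 - deltaInt n a l

namespace IsXaSpan

variable {n : ℕ} {a : ZMod n → ℕ} {i l : ℤ}

lemma le_add (hn : 0 < n) (h : IsXaSpan n a i l) : l ≤ i + n := by
  by_contra! hl
  exact (h.psum_lt (i + n) (by omega) hl).ne (by simpa using psum_add_mul (a := a) i 1)

lemma add_mul (h : IsXaSpan n a i l) (c : ℤ) : IsXaSpan n a (i + c * n) (l + c * n) where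
  add_two_le := by linarith [h.add_two_le]
  psum_lt m h1 h2 := by
    rw [psum_add_mul, ← sub_add_cancel m (c * n), psum_add_mul]
    exact h.psum_lt _ (by linarith) (by linarith)
  psum_le := by simpa [psum_add_mul, deltaInt] using h.psum_le

lemma of_intCast_eq (h : IsXaSpan n a i l) {x : ℤ} (hx : (x : ZMod n) = i) :
    IsXaSpan n a x (x + (l - i)) := by
  obtain ⟨c, hc⟩ := (ZMod.intCast_eq_intCast_iff_dvd_sub _ _ _).1 hx
  convert h.add_mul (-c) using 1 <;> linarith

lemma kmax_eq (h : IsXaSpan n a i l) : kmax n a l (psum n a i - psum n a (l - 1)) = i := by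
  refine IsGreatest.csSup_eq ⟨⟨by linarith [h.add_two_le], by ring⟩, fun k ⟨hk, hki⟩ => ?_⟩
  by_contra! hik
  have := h.psum_lt k hik (by omega)
  omega

end IsXaSpan

section Spans

variable {n : ℕ} {a : ZMod n → ℕ}

lemma isXaSpan_kmax (hn : 0 < n) (ha : ∑ p ∈ Finset.Icc 1 n, a ((p : ℕ) : ZMod n) = n)
    {l s : ℤ} (hs1 : 1 ≤ s) (hs2 : s ≤ (a (l : ZMod n) : ℤ) - deltaInt n a l) :
    IsXaSpan n a (kmax n a l s) l := by
  obtain ⟨hk, hks⟩ := kmax_spec hn ha hs1 hs2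
  have := psum_step hn ha l
  exact ⟨by omega, fun m h1 h2 => hks ▸ psum_lt_of_kmax_lt hn ha hs1 h1 h2, by omega⟩

lemma proj_mem_Xa (hn : 0 < n) {j : ℤ} (hj : psum n a j = pnorm n a) :
    Arc.proj (j : ZMod n) ∈ Xa n a := by
  have hr := natCast_resRep hn j
  exact Or.inl ⟨resRep n j, Finset.mem_Icc.2 ⟨one_le_resRep n j, resRep_le hn j⟩,
    (psum_congr (by simpa using hr)).trans hj, by rw [hr]⟩

lemma ofInt_mem_Xa (hn : 0 < n) (ha : ∑ p ∈ Finset.Icc 1 n, a ((p : ℕ) : ZMod n) = n)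
    {i l : ℤ} (h : IsXaSpan n a i l) : Arc.ofInt i l ∈ Xa n a := by
  set L := resRep n l
  obtain ⟨c, hc⟩ := (ZMod.intCast_eq_intCast_iff_dvd_sub _ _ _).1
    (by simpa using natCast_resRep hn l : ((L : ℤ) : ZMod n) = l)
  -- translate the span so that it ends at the representative `L ∈ [1, n]`
  have hL : IsXaSpan n a (i - c * n) L := by
    convert h.add_mul (-c) using 1 <;> linarith
  have := psum_step hn ha L
  rw [Int.cast_natCast] at this
  have := hL.psum_lt (L - 1) (by linarith [hL.add_two_le]) (by omega)
  have := hL.psum_le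
  refine Or.inr ⟨L, Finset.mem_Icc.2 ⟨one_le_resRep n l, resRep_le hn l⟩,
    psum n a (i - c * n) - psum n a (L - 1), by omega, by omega, ?_⟩
  rw [hL.kmax_eq, ← Arc.ofInt_add_mul i l (-c)]
  congr 1 <;> linarith

lemma mem_Xa_iff (hn : 0 < n) (ha : ∑ p ∈ Finset.Icc 1 n, a ((p : ℕ) : ZMod n) = n)
    {b : Arc n} : b ∈ Xa n a ↔ (∃ j : ℤ, psum n a j = pnorm n a ∧ b = .proj (j : ZMod n)) ∨
      ∃ i l : ℤ, IsXaSpan n a i l ∧ b = Arc.ofInt i l := by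
  refine ⟨?_, ?_⟩
  · rintro (⟨j, -, hj, rfl⟩ | ⟨l, -, s, hs1, hs2, rfl⟩)
    · exact Or.inl ⟨j, hj, by simp⟩
    · exact Or.inr ⟨_, _, isXaSpan_kmax hn ha hs1 (by simpa using hs2), rfl⟩
  · rintro (⟨j, hj, rfl⟩ | ⟨i, l, h, rfl⟩)
    · exact proj_mem_Xa hn hj
    · exact ofInt_mem_Xa hn ha h

end Spans

section Compatibility

variable {n : ℕ} {a : ZMod n → ℕ}

lemma not_compatible_ofInt_of_lt {i j l m : ℤ} (hij : i < j) (hjl : j < l) (hlm : l < m) :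
    ¬ (Arc.ofInt i l : Arc n).Compatible (Arc.ofInt j m) :=
  fun h => h ⟨i, j, rfl, rfl, Or.inl ⟨hij, by omega, by omega⟩⟩

lemma not_compatible_ofInt_of_gt {i j l m : ℤ} (hji : j < i) (him : i < m) (hml : m < l) :
    ¬ (Arc.ofInt i l : Arc n).Compatible (Arc.ofInt j m) :=
  fun h => h ⟨i, j, rfl, rfl, Or.inr ⟨hji, by omega, by omega⟩⟩

lemma not_compatible_ofInt_proj {i j l : ℤ} (hij : i < j) (hjl : j < l) :
    ¬ (Arc.ofInt i l : Arc n).Compatible (.proj (j : ZMod n)) :=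
  fun h => h ⟨i, j, rfl, rfl, hij, by omega⟩

lemma not_compatible_proj_ofInt {i j l : ℤ} (hij : i < j) (hjl : j < l) :
    ¬ (Arc.proj (j : ZMod n)).Compatible (Arc.ofInt i l) :=
  not_compatible_ofInt_proj hij hjl

namespace IsXaSpan

variable {i j l m : ℤ}

/-- Otherwise `psum l < psum j < psum i ≤ psum l + 1`. -/
lemma le_of_lt_of_lt (h₁ : IsXaSpan n a i l) (h₂ : IsXaSpan n a j m) (hij : i < j)
    (hjl : j < l) : m ≤ l := by
  by_contra! hlm
  have := h₁.psum_lt j hij hjl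
  have := h₂.psum_lt l hjl hlm
  have := h₁.psum_le
  have := deltaInt_nonneg n a l
  omega

lemma compatible (h₁ : IsXaSpan n a i l) (h₂ : IsXaSpan n a j m) :
    (Arc.ofInt i l : Arc n).Compatible (Arc.ofInt j m) := by
  rintro ⟨x, y, hx, hy, hcross⟩
  have h₁' := h₁.of_intCast_eq hx
  have h₂' := h₂.of_intCast_eq hy
  have := h₁.add_two_le
  have := h₂.add_two_le
  rcases hcross with ⟨hxy, hyl, hlm⟩ | ⟨hyx, hxm, hml⟩
  · have := h₁'.le_of_lt_of_lt h₂' hxy (by omega)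
    omega
  · have := h₂'.le_of_lt_of_lt h₁' hyx (by omega)
    omega

lemma compatible_proj (hn : 0 < n) (h : IsXaSpan n a i l) (hj : psum n a j = pnorm n a) :
    (Arc.ofInt i l : Arc n).Compatible (.proj (j : ZMod n)) := by
  rintro ⟨x, y, hx, hy, hxy, hyl⟩
  have := h.add_two_le
  have hlt := (h.of_intCast_eq hx).psum_lt y hxy (by omega)
  rw [psum_congr hy, hj] at hlt
  exact (psum_le_pnorm hn a x).not_gt hlt

end IsXaSpan

theorem pairwiseCompatible_Xa (hn : 0 < n)
    (ha : ∑ p ∈ Finset.Icc 1 n, a ((p : ℕ) : ZMod n) = n) : PairwiseCompatible n (Xa n a) := by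
  refine ⟨fun b hb => ?_, fun b hb c hc => ?_⟩
  · rcases (mem_Xa_iff hn ha).1 hb with ⟨j, -, rfl⟩ | ⟨i, l, h, rfl⟩
    · trivial
    · have := h.add_two_le
      have := h.le_add hn
      exact ⟨by omega, by omega⟩
  · rcases (mem_Xa_iff hn ha).1 hb with ⟨j, hj, rfl⟩ | ⟨i, l, h, rfl⟩ <;>
      rcases (mem_Xa_iff hn ha).1 hc with ⟨j', hj', rfl⟩ | ⟨i', l', h', rfl⟩
    · trivial
    · exact h'.compatible_proj hn hj
    · exact h.compatible_proj hn hj'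
    · exact h.compatible h'

end Compatibility

section Maximality

variable {n : ℕ} {a : ZMod n → ℕ}

lemma exists_isXaSpan_to (hn : 0 < n) (ha : ∑ p ∈ Finset.Icc 1 n, a ((p : ℕ) : ZMod n) = n)
    {p l v : ℤ} (hpl : p < l) (hint : ∀ m, p < m → m < l → psum n a m ≤ psum n a p)
    (hpv : psum n a p < v) (hvl : v ≤ psum n a l + 1 - deltaInt n a l) :
    ∃ k < p, IsXaSpan n a k l ∧ psum n a k = v ∧ ∀ m < l - 1, psum n a m = v → m ≤ k := by
  have hl : psum n a (l - 1) ≤ psum n a p := by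
    rcases (show p ≤ l - 1 by omega).eq_or_lt with h | h
    · rw [h]
    · exact hint _ h (by omega)
  have := psum_step hn ha l
  have hs1 : 1 ≤ v - psum n a (l - 1) := by omega
  have hs2 : v - psum n a (l - 1) ≤ (a (l : ZMod n) : ℤ) - deltaInt n a l := by omega
  obtain ⟨hk, hkv⟩ := kmax_spec hn ha hs1 hs2
  refine ⟨_, ?_, isXaSpan_kmax hn ha hs1 hs2, by omega, fun m hm hmv => le_kmax hm (by omega)⟩
  by_contra! hpk
  rcases hpk.eq_or_lt with h | h
  · rw [← h] at hkv
    omega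
  · have := hint _ h (by omega)
    omega

lemma exists_isXaSpan_around (hn : 0 < n)
    (ha : ∑ p ∈ Finset.Icc 1 n, a ((p : ℕ) : ZMod n) = n) {p : ℤ} (hp : psum n a p < pnorm n a) :
    ∃ k l, k < p ∧ p < l ∧ IsXaSpan n a k l ∧ ∀ m < p, psum n a m = psum n a p + 1 → m ≤ k := by
  obtain ⟨q, ⟨hpq, -⟩, hq⟩ := exists_mem_Ico_psum_eq_pnorm hn a (p + 1)
  obtain ⟨l, hpl, -, hl, hfirst⟩ :=
    exists_first_le_apply (g := psum n a) (v := psum n a p + 1) (by omega : p < q) (by omega)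
  have hvl : psum n a p + 1 ≤ psum n a l + 1 - deltaInt n a l := by
    unfold deltaInt; split_ifs <;> omega
  obtain ⟨k, hkp, hk, -, hmax⟩ := exists_isXaSpan_to hn ha hpl
    (fun m h₁ h₂ => by linarith [hfirst m h₁ h₂]) (lt_add_one _) hvl
  exact ⟨k, l, hkp, hpl, hk, fun m hm hmv => hmax m (by omega) hmv⟩

lemma proj_mem_Xa_of_forall_compatible (hn : 0 < n)
    (ha : ∑ p ∈ Finset.Icc 1 n, a ((p : ℕ) : ZMod n) = n) {j : ℤ}
    (h : ∀ b ∈ Xa n a, (Arc.proj (j : ZMod n)).Compatible b) : Arc.proj (j : ZMod n) ∈ Xa n a := by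
  refine proj_mem_Xa hn ((psum_le_pnorm hn a j).eq_of_not_lt fun hj => ?_)
  obtain ⟨k, l, hkj, hjl, hkl, -⟩ := exists_isXaSpan_around hn ha hj
  exact not_compatible_proj_ofInt hkj hjl (h _ (ofInt_mem_Xa hn ha hkl))

lemma psum_lt_pnorm_of_forall_compatible (hn : 0 < n) {i l m : ℤ}
    (h : ∀ b ∈ Xa n a, (Arc.ofInt i l : Arc n).Compatible b) (him : i < m) (hml : m < l) :
    psum n a m < pnorm n a :=
  (psum_le_pnorm hn a m).lt_of_ne fun hm =>
    not_compatible_ofInt_proj him hml (h _ (proj_mem_Xa hn hm))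

lemma psum_lt_of_forall_compatible (hn : 0 < n)
    (ha : ∑ p ∈ Finset.Icc 1 n, a ((p : ℕ) : ZMod n) = n) {i l m : ℤ}
    (h : ∀ b ∈ Xa n a, (Arc.ofInt i l : Arc n).Compatible b) (him : i < m) (hml : m < l) :
    psum n a m < psum n a i := by
  by_contra! hm
  obtain ⟨l', hil', hl'm, hl', hfirst⟩ := exists_first_le_apply him hm
  have hM := psum_lt_pnorm_of_forall_compatible hn h hil' (by omega)
  obtain ⟨k, hki, hk, -⟩ := exists_isXaSpan_to hn ha hil' (fun m h₁ h₂ => (hfirst m h₁ h₂).le)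
    (by rw [deltaInt_of_ne hM.ne]; omega) le_rfl
  exact not_compatible_ofInt_of_gt hki hil' (by omega) (h _ (ofInt_mem_Xa hn ha hk))

lemma psum_le_of_forall_compatible (hn : 0 < n)
    (ha : ∑ p ∈ Finset.Icc 1 n, a ((p : ℕ) : ZMod n) = n) {i l : ℤ} (hil : i ≤ l)
    (h : ∀ b ∈ Xa n a, (Arc.ofInt i l : Arc n).Compatible b) :
    psum n a i ≤ psum n a l + 1 - deltaInt n a l := by
  by_contra! hlt
  have hM : psum n a l < pnorm n a := (psum_le_pnorm hn a l).lt_of_ne fun hl => by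
    rw [deltaInt_of_eq hl] at hlt
    linarith [psum_le_pnorm hn a i]
  rw [deltaInt_of_ne hM.ne] at hlt
  obtain ⟨k, l', hkl, hll', hk, hmax⟩ := exists_isXaSpan_around hn ha hM
  obtain ⟨k₀, hik₀, hk₀l, hk₀, -⟩ := exists_last_apply_eq (psum_sub_one_le hn ha) hil
    (v := psum n a l + 1) (by omega) (by omega)
  have hik₀ : i < k₀ := hik₀.lt_of_ne (by rintro rfl; omega)
  exact not_compatible_ofInt_of_lt (hik₀.trans_le (hmax k₀ hk₀l hk₀)) hkl hll'
    (h _ (ofInt_mem_Xa hn ha hk))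

lemma mem_Xa_of_forall_compatible (hn : 0 < n)
    (ha : ∑ p ∈ Finset.Icc 1 n, a ((p : ℕ) : ZMod n) = n) {b : Arc n} (hb : b.IsAdmissible)
    (h : ∀ c ∈ Xa n a, b.Compatible c) : b ∈ Xa n a := by
  rcases b with ⟨i, t⟩ | j
  · obtain ⟨i, rfl⟩ := ZMod.intCast_surjective i
    have ht : 2 ≤ t := hb.1
    have heq : Arc.inner (i : ZMod n) t = Arc.ofInt i (i + t) := by simp [Arc.ofInt]
    rw [heq] at h ⊢
    exact ofInt_mem_Xa hn ha ⟨by omega, fun m => psum_lt_of_forall_compatible hn ha h,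
      psum_le_of_forall_compatible hn ha (by omega) h⟩
  · obtain ⟨j, rfl⟩ := ZMod.intCast_surjective j
    exact proj_mem_Xa_of_forall_compatible hn ha h

theorem eq_Xa_of_subset (hn : 0 < n) (ha : ∑ p ∈ Finset.Icc 1 n, a ((p : ℕ) : ZMod n) = n)
    {Y : Set (Arc n)} (hY : PairwiseCompatible n Y) (hXY : Xa n a ⊆ Y) : Y = Xa n a :=
  (Set.Subset.antisymm · hXY) fun b hb =>
    mem_Xa_of_forall_compatible hn ha (hY.1 b hb) fun c hc => hY.2 b hb c (hXY hc)

end Maximality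

section Top

variable {n : ℕ} {a : ZMod n → ℕ}

lemma natCast_injOn_Icc : Set.InjOn (Nat.cast : ℕ → ZMod n) (Set.Icc 1 n) := by
  intro j hj l hl h
  have := resRep_congr (n := n) (p := j) (q := l) (by simpa using h)
  have := resRep_eq_of_mem_Icc (n := n) (p := j) (by simp [hj.1]) (by simp [hj.2])
  have := resRep_eq_of_mem_Icc (n := n) (p := l) (by simp [hl.1]) (by simp [hl.2])
  omega

lemma injOn_ofInt_kmax (hn : 0 < n) (ha : ∑ p ∈ Finset.Icc 1 n, a ((p : ℕ) : ZMod n) = n)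
    (l : ℤ) : Set.InjOn (fun s => (Arc.ofInt (kmax n a l s) l : Arc n))
      (Set.Icc 1 ((a (l : ZMod n) : ℤ) - deltaInt n a l)) := by
  intro s ⟨hs1, hs2⟩ s' ⟨hs1', hs2'⟩ h
  obtain ⟨hk, hks⟩ := kmax_spec hn ha hs1 hs2
  obtain ⟨hk', hks'⟩ := kmax_spec hn ha hs1' hs2'
  have : kmax n a l s = kmax n a l s' := by
    simp only [Arc.ofInt, Arc.inner.injEq] at h
    omega
  rw [this] at hks
  omega

lemma Xa_sep_terminal_eq (hn : 0 < n) (ha : ∑ p ∈ Finset.Icc 1 n, a ((p : ℕ) : ZMod n) = n)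
    {L : ℕ} (hL : L ∈ Set.Icc 1 n) :
    {b ∈ Xa n a | b.terminal = (L : ZMod n)} =
      {b | psum n a L = pnorm n a ∧ b = Arc.proj (L : ZMod n)} ∪
        (fun s => Arc.ofInt (kmax n a L s) L) ''
          Set.Icc 1 ((a (L : ZMod n) : ℤ) - deltaInt n a L) := by
  ext b
  constructor
  · rintro ⟨⟨j, hj, hjM, rfl⟩ | ⟨l, hl, s, hs1, hs2, rfl⟩, hb⟩
    · obtain rfl : j = L := natCast_injOn_Icc (Finset.mem_Icc.1 hj) hL hb
      exact Or.inl ⟨hjM, rfl⟩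
    · change (Arc.ofInt (kmax n a l s) l : Arc n).terminal = _ at hb
      have hk := (kmax_spec (l := l) hn ha hs1 (by simpa using hs2)).1
      rw [Arc.terminal_ofInt (by omega), Int.cast_natCast] at hb
      obtain rfl : l = L := natCast_injOn_Icc (Finset.mem_Icc.1 hl) hL hb
      exact Or.inr ⟨s, ⟨hs1, hs2⟩, rfl⟩
  · rintro (⟨hM, rfl⟩ | ⟨s, ⟨hs1, hs2⟩, rfl⟩)
    · exact ⟨Or.inl ⟨L, Finset.mem_Icc.2 hL, hM, rfl⟩, rfl⟩
    · have hk := (kmax_spec (l := L) hn ha hs1 (by simpa using hs2)).1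
      refine ⟨Or.inr ⟨L, Finset.mem_Icc.2 hL, s, hs1, hs2, rfl⟩, ?_⟩
      rw [Arc.terminal_ofInt (by omega), Int.cast_natCast]

theorem topSeq_Xa (hn : 0 < n) (ha : ∑ p ∈ Finset.Icc 1 n, a ((p : ℕ) : ZMod n) = n) :
    topSeq n (Xa n a) = a := by
  funext c
  obtain ⟨L, hL, rfl⟩ : ∃ L ∈ Set.Icc 1 n, (L : ZMod n) = c := by
    obtain ⟨p, rfl⟩ := ZMod.intCast_surjective c
    exact ⟨resRep n p, ⟨one_le_resRep n p, resRep_le hn p⟩, natCast_resRep hn p⟩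
  have hproj : {b | psum n a L = pnorm n a ∧ b = Arc.proj (L : ZMod n)}.ncard =
      (deltaInt n a L).toNat := by
    by_cases h : psum n a L = pnorm n a <;> simp [h, deltaInt]
  have hinj := injOn_ofInt_kmax hn ha L
  have hδ := deltaInt_le hn ha L
  have := deltaInt_nonneg n a L
  rw [Int.cast_natCast] at hinj hδ
  rw [topSeq, Xa_sep_terminal_eq hn ha hL, Set.ncard_union_eq ?_ ?_ ((Set.finite_Icc _ _).image _),
    hproj, hinj.ncard_image, ← Finset.coe_Icc, Set.ncard_coe_finset, Int.card_Icc]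
  · omega
  · exact Set.disjoint_left.2 fun _ ⟨_, hb⟩ ⟨_, _, hs⟩ => by rw [hb] at hs; cases hs
  · exact (Set.finite_singleton _).subset fun _ hb => hb.2

end Top

/-- **Adachi, Proposition 2.9.** For every `a ∈ 𝒵(n)`, the set `X_a` is a
triangulation of the punctured `n`-gon and `top(X_a) = a`. -/
theorem Xa_isTriangulation_and_top (n : ℕ) (hn : 0 < n) (a : ZMod n → ℕ)
    (ha : ∑ p ∈ Finset.Icc 1 n, a ((p : ℕ) : ZMod n) = n) :
    IsTriangulation n (Xa n a) ∧ topSeq n (Xa n a) = a :=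
  ⟨⟨pairwiseCompatible_Xa hn ha, fun _ => eq_Xa_of_subset hn ha⟩, topSeq_Xa hn ha⟩

end Punctured
end

section
/- Let n be a positive integer. Every triangulation X ∈ 𝒯(n) of the punctured n-gon contains at least one projective arc. (Adachi, Proposition 2.4(2).) -/
/-!
Combinatorial model of admissible arcs and triangulations of a regular
`n`-gon with one puncture (following Adachi, "The classification of
τ-tilting modules over Nakayama algebras").
-/

namespace Punctured

/-!
The projective arc to the starting vertex `i` of a longest inner arc `(i, t)` of a triangulation
crosses no arc of it: an inner arc strictly containing a lift of `i` has length at most `t`, so it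
would cross `(i, t)`. By maximality the triangulation contains that projective arc. Without inner
arcs, every projective arc is compatible with everything.
-/

namespace Arc

variable {n : ℕ}

theorem compatible_proj_comm (j : ZMod n) (b : Arc n) :
    (proj j).Compatible b ↔ b.Compatible (proj j) := by
  cases b <;> rfl

theorem inner_compatible_proj_of_length_le {i k : ZMod n} {t s : ℕ}
    (h : (inner i t).Compatible (inner k s)) (hst : s ≤ t) :
    (inner k s).Compatible (proj i) := by
  rintro ⟨x, y, hxk, hyi, hxy, hys⟩
  exact h ⟨y, x, hyi, hxk, Or.inr ⟨hxy, hys, by omega⟩⟩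

end Arc

variable {n : ℕ} {X : Set (Arc n)}

theorem PairwiseCompatible.insert_proj (hX : PairwiseCompatible n X) {j : ZMod n}
    (hj : ∀ b ∈ X, b.Compatible (.proj j)) : PairwiseCompatible n (insert (.proj j) X) := by
  refine ⟨?_, ?_⟩
  · rintro a (rfl | ha)
    exacts [trivial, hX.1 a ha]
  · rintro a (rfl | ha) b (rfl | hb)
    · trivial
    · exact (Arc.compatible_proj_comm j b).2 (hj b hb)
    · exact hj a ha
    · exact hX.2 a ha b hb

theorem IsTriangulation.proj_mem_of_forall_compatible (hX : IsTriangulation n X) {j : ZMod n}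
    (hj : ∀ b ∈ X, b.Compatible (.proj j)) : Arc.proj j ∈ X :=
  hX.2 _ (hX.1.insert_proj hj) (Set.subset_insert _ _) ▸ Set.mem_insert _ _

theorem PairwiseCompatible.exists_proj_forall_compatible (hX : PairwiseCompatible n X) :
    ∃ j : ZMod n, ∀ b ∈ X, b.Compatible (.proj j) := by
  by_cases hin : ∃ i t, Arc.inner i t ∈ X
  · set S : Set ℕ := {t | ∃ i, Arc.inner i t ∈ X}
    have hSne : S.Nonempty := by
      obtain ⟨i, t, h⟩ := hin
      exact ⟨t, i, h⟩
    have hSbdd : BddAbove S := ⟨n, fun t ⟨_, h⟩ => (hX.1 _ h).2⟩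
    obtain ⟨i, hlongest⟩ := Nat.sSup_mem hSne hSbdd
    refine ⟨i, fun b hb => ?_⟩
    cases b with
    | inner k s =>
      exact Arc.inner_compatible_proj_of_length_le (hX.2 _ hlongest _ hb)
        (le_csSup hSbdd ⟨k, hb⟩)
    | proj _ => trivial
  · refine ⟨0, fun b hb => ?_⟩
    cases b with
    | inner i t => exact absurd ⟨i, t, hb⟩ hin
    | proj _ => trivial

theorem triangulation_exists_proj_general (n : ℕ)
    (X : Set (Arc n)) (hX : IsTriangulation n X) :
    ∃ j : ZMod n, Arc.proj j ∈ X := by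
  obtain ⟨j, hj⟩ := hX.1.exists_proj_forall_compatible
  exact ⟨j, hX.proj_mem_of_forall_compatible hj⟩

/-- **Adachi, Proposition 2.4(2).** Every triangulation of the punctured
`n`-gon contains at least one projective arc. -/
theorem triangulation_exists_proj (n : ℕ) (hn : 0 < n)
    (X : Set (Arc n)) (hX : IsTriangulation n X) :
    ∃ j : ZMod n, Arc.proj j ∈ X :=
  triangulation_exists_proj_general n X hX

end Punctured
end

section
/- Let n be a positive integer, X ∈ 𝒯(n) a triangulation of the punctured n-gon, i, j ∈ ℤ/nℤ, and let d ∈ {1, …, n} be the representative of j − i modulo n. Then the fan subset satisfies |X_{i,j}| ≤ d − 1. Moreover, if d ≥ 2, then |X_{i,j}| = d − 1 if and only if the inner arc (i, d) (the inner arc from i to j) belongs to X. (Adachi, Lemma 2.3.) -/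
/-!
Combinatorial model of admissible arcs and triangulations of a regular
`n`-gon with one puncture (following Adachi, "The classification of
τ-tilting modules over Nakayama algebras").
-/

namespace Punctured

/-- The fan subset `X_{i,j}` of a set `X` of arcs: with `x₀` a fixed integer
lift of `i` and `d ∈ {1, …, n}` the representative of `j − i` modulo `n`,
it consists of the inner arcs `(k, s) ∈ X` admitting an integer lift
`x ≡ k (mod n)` with `x₀ ≤ x` and `x + s ≤ x₀ + d`. -/
def fanSet (n : ℕ) (X : Set (Arc n)) (x₀ : ℤ) (d : ℕ) : Set (Arc n) :=
  {arc | arc ∈ X ∧ ∃ k : ZMod n, ∃ s : ℕ, arc = Arc.inner k s ∧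
    ∃ x : ℤ, (x : ZMod n) = k ∧ x₀ ≤ x ∧ x + (s : ℤ) ≤ x₀ + (d : ℤ)}


/-!
Lift the fan to integer chords `(x, x + s)` inside the window `[x₀, x₀ + d]`; since `d ≤ n`
this is a bijection onto a family of pairwise non-crossing chords of length at least `2`.
A saturated non-crossing family in a window `[L, R]` contains `(L, R)` and splits, along the
triangle on `(L, R)`, into saturated families in two smaller windows, so by induction it has
exactly `R - L - 1` chords; as every family extends to a saturated one, this is also the
bound. A family of size `R - L - 1` contains `(L, R)`, since adding it would exceed the bound.
Conversely, if `(i, d) ∈ X`, its lift `(x₀, x₀ + d)` shields the window from every arc of `X`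
outside it, so a chord crossing no chord of the lifted fan is compatible with all of `X`; by
maximality of `X` the lifted fan is saturated.
-/

section Chords

def Crosses (c c' : ℤ × ℤ) : Prop :=
  c.1 < c'.1 ∧ c'.1 < c.2 ∧ c.2 < c'.2

def InWindow (L R : ℤ) (c : ℤ × ℤ) : Prop :=
  L ≤ c.1 ∧ c.1 + 2 ≤ c.2 ∧ c.2 ≤ R

def IsNoncrossing (L R : ℤ) (S : Finset (ℤ × ℤ)) : Prop :=
  (∀ c ∈ S, InWindow L R c) ∧ ∀ c ∈ S, ∀ c' ∈ S, ¬ Crosses c c'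

def IsSaturated (L R : ℤ) (S : Finset (ℤ × ℤ)) : Prop :=
  ∀ c, InWindow L R c → (∀ c' ∈ S, ¬ Crosses c c' ∧ ¬ Crosses c' c) → c ∈ S

variable {L R : ℤ} {c q : ℤ × ℤ} {S : Finset (ℤ × ℤ)}

lemma InWindow.not_crosses_bound (hc : InWindow L R c) :
    ¬ Crosses c (L, R) ∧ ¬ Crosses (L, R) c := by
  unfold InWindow Crosses at *; omega

lemma InWindow.mono {L' R' : ℤ} (hc : InWindow L R c) (hL : L' ≤ L) (hR : R ≤ R') :
    InWindow L' R' c := by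
  unfold InWindow at *; omega

lemma InWindow.of_crosses (hc : InWindow L R c) (hq : q.1 + 2 ≤ q.2)
    (hbound : ¬ Crosses (L, R) q ∧ ¬ Crosses q (L, R)) (hcq : Crosses c q ∨ Crosses q c) :
    InWindow L R q := by
  unfold InWindow Crosses at *; omega

lemma IsNoncrossing.insert_of_forall_not_crosses (hS : IsNoncrossing L R S) (hc : InWindow L R c)
    (hfree : ∀ c' ∈ S, ¬ Crosses c c' ∧ ¬ Crosses c' c) :
    IsNoncrossing L R (insert c S) := by
  classical
  have hirrefl : ¬ Crosses c c := fun h => lt_irrefl _ h.1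
  refine ⟨fun c' hc' => ?_, fun a ha b hb => ?_⟩
  · rcases Finset.mem_insert.mp hc' with rfl | hc'
    exacts [hc, hS.1 c' hc']
  · rw [Finset.mem_insert] at ha hb
    rcases ha with rfl | ha <;> rcases hb with rfl | hb
    exacts [hirrefl, (hfree b hb).1, (hfree a ha).2, hS.2 a ha b hb]

lemma IsNoncrossing.filter (hS : IsNoncrossing L R S) {L' R' : ℤ} (p : ℤ × ℤ → Prop)
    [DecidablePred p] (hp : ∀ c ∈ S, p c → InWindow L' R' c) :
    IsNoncrossing L' R' (S.filter p) := by
  simp only [IsNoncrossing, Finset.mem_filter] at *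
  exact ⟨fun c hc => hp c hc.1 hc.2, fun c hc c' hc' => hS.2 c hc.1 c' hc'.1⟩

lemma IsSaturated.bound_mem (hS : IsSaturated L R S) (hN : IsNoncrossing L R S)
    (hLR : L + 2 ≤ R) : (L, R) ∈ S :=
  hS _ ⟨le_rfl, hLR, le_rfl⟩ fun _ hc' => (hN.1 _ hc').not_crosses_bound.symm

lemma IsSaturated.filter_inWindow {L' R' : ℤ} [DecidablePred (InWindow L' R')]
    (hS : IsSaturated L R S) (hL : L ≤ L') (hR : R' ≤ R)
    (hout : ∀ c' ∈ S, ¬ InWindow L' R' c' → ∀ c, InWindow L' R' c →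
      ¬ Crosses c c' ∧ ¬ Crosses c' c) :
    IsSaturated L' R' (S.filter (InWindow L' R')) := by
  intro c hc hfree
  refine Finset.mem_filter.mpr ⟨hS c (hc.mono hL hR) fun c' hc' => ?_, hc⟩
  by_cases hc'w : InWindow L' R' c'
  · exact hfree c' (Finset.mem_filter.mpr ⟨hc', hc'w⟩)
  · exact hout c' hc' hc'w c hc

/-- Take for `a` the least left end of a chord `(a, R) ≠ (L, R)` of `S`, or `R - 1` if there is
none. -/
lemma IsNoncrossing.exists_split (hN : IsNoncrossing L R S) (hLR : L + 2 ≤ R) :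
    ∃ a, L < a ∧ a < R ∧ ∀ c ∈ S, c = (L, R) ∨ a ≤ c.1 ∨ c.2 ≤ a := by
  classical
  set B := insert (R - 1) ((S.filter fun c => c.2 = R ∧ L < c.1).image Prod.fst)
  have hB : B.Nonempty := Finset.insert_nonempty _ _
  have hmem := B.min'_mem hB
  have hle : ∀ b ∈ B, B.min' hB ≤ b := fun b hb => B.min'_le b hb
  have hlast : B.min' hB = R - 1 ∨ ∃ c' ∈ S, c'.2 = R ∧ L < c'.1 ∧ c'.1 = B.min' hB := by
    simpa [B, and_assoc] using hmem
  have hR1 := hle _ (Finset.mem_insert_self _ _)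
  refine ⟨B.min' hB, by rcases hlast with h | ⟨c', -, -, h, h'⟩ <;> omega, by omega, ?_⟩
  intro c hc
  by_contra! h
  obtain ⟨hne, h1, h2⟩ := h
  obtain ⟨hc1, hc2, hc3⟩ := hN.1 c hc
  rcases hc3.lt_or_eq with hc3 | hc3
  · rcases hlast with h | ⟨c', hc', hc'2, -, hc'1⟩
    · omega
    · exact hN.2 c hc c' hc' ⟨by omega, by omega, by omega⟩
  · rcases hc1.lt_or_eq with hc1 | hc1
    · have := hle c.1 (Finset.mem_insert_of_mem (Finset.mem_image.mpr
        ⟨c, Finset.mem_filter.mpr ⟨hc, hc3, hc1⟩, rfl⟩))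
      omega
    · exact hne (Prod.ext hc1.symm hc3)

lemma IsNoncrossing.card_eq_of_split {a : ℤ} [DecidablePred (InWindow L a)]
    [DecidablePred (InWindow a R)] (hN : IsNoncrossing L R S) (hbound : (L, R) ∈ S)
    (hLa : L < a) (haR : a < R) (hsplit : ∀ c ∈ S, c = (L, R) ∨ a ≤ c.1 ∨ c.2 ≤ a) :
    S.card = (S.filter (InWindow L a)).card + (S.filter (InWindow a R)).card + 1 := by
  set lo := S.filter (InWindow L a)
  set hi := S.filter (InWindow a R)
  have hdisj : Disjoint lo hi := Finset.disjoint_left.mpr fun c hlo hhi => by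
    have := (Finset.mem_filter.mp hlo).2
    have := (Finset.mem_filter.mp hhi).2
    unfold InWindow at *; omega
  have hnotin : (L, R) ∉ lo ∪ hi := by
    simp only [lo, hi, Finset.mem_union, Finset.mem_filter, InWindow]; omega
  have hS_eq : S = insert (L, R) (lo ∪ hi) := by
    ext c
    simp only [Finset.mem_insert, Finset.mem_union, Finset.mem_filter, lo, hi]
    constructor
    · intro hc
      have := hN.1 c hc
      rcases hsplit c hc with h | h | h
      exacts [.inl h, .inr (.inr ⟨hc, h, this.2⟩), .inr (.inl ⟨hc, this.1, this.2.1, h⟩)]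
    · rintro (rfl | ⟨hc, -⟩ | ⟨hc, -⟩)
      exacts [hbound, hc, hc]
  rw [hS_eq, Finset.card_insert_of_notMem hnotin, Finset.card_union_of_disjoint hdisj]

theorem IsNoncrossing.card_eq_of_isSaturated (hN : IsNoncrossing L R S)
    (hS : IsSaturated L R S) (hLR : L < R) : (S.card : ℤ) = R - L - 1 := by
  classical
  induction hw : (R - L).toNat using Nat.strong_induction_on generalizing L R S with
  | _ w ih =>
  rcases (show R = L + 1 ∨ L + 2 ≤ R by omega) with rfl | hLR2
  · have : S = ∅ := Finset.eq_empty_of_forall_notMem fun c hc => by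
      have := hN.1 c hc; unfold InWindow at this; omega
    simp [this]
  obtain ⟨a, hLa, haR, hsplit⟩ := hN.exists_split hLR2
  have hout : ∀ {L' R'}, L' = L ∧ R' = a ∨ L' = a ∧ R' = R → ∀ c' ∈ S,
      ¬ InWindow L' R' c' → ∀ c, InWindow L' R' c → ¬ Crosses c c' ∧ ¬ Crosses c' c := by
    intro L' R' hLR' c' hc' hc'w c hc
    have := hN.1 c' hc'
    rcases hsplit c' hc' with rfl | h | h <;> unfold InWindow Crosses at * <;> omega
  have hlo : ((S.filter (InWindow L a)).card : ℤ) = a - L - 1 :=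
    ih _ (by omega) (hN.filter _ fun _ _ h => h)
      (hS.filter_inWindow le_rfl haR.le (hout (.inl ⟨rfl, rfl⟩))) hLa rfl
  have hhi : ((S.filter (InWindow a R)).card : ℤ) = R - a - 1 :=
    ih _ (by omega) (hN.filter _ fun _ _ h => h)
      (hS.filter_inWindow hLa.le le_rfl (hout (.inr ⟨rfl, rfl⟩))) haR rfl
  have hcard := hN.card_eq_of_split (hS.bound_mem hN hLR2) hLa haR hsplit
  omega

noncomputable def windowChords (L R : ℤ) : Finset (ℤ × ℤ) :=
  (Finset.Icc L R ×ˢ Finset.Icc L R).filter fun c => L ≤ c.1 ∧ c.1 + 2 ≤ c.2 ∧ c.2 ≤ R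

lemma mem_windowChords : c ∈ windowChords L R ↔ InWindow L R c := by
  simp only [windowChords, Finset.mem_filter, Finset.mem_product, Finset.mem_Icc, InWindow]
  omega

lemma IsNoncrossing.exists_isSaturated_superset (hN : IsNoncrossing L R S) :
    ∃ T, S ⊆ T ∧ IsNoncrossing L R T ∧ IsSaturated L R T := by
  classical
  set F := (windowChords L R).powerset.filter fun T => S ⊆ T ∧ IsNoncrossing L R T
  have hSF : S ∈ F := Finset.mem_filter.mpr
    ⟨Finset.mem_powerset.mpr fun c hc => mem_windowChords.mpr (hN.1 c hc), subset_rfl, hN⟩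
  obtain ⟨T, hT, hmax⟩ := F.exists_max_image Finset.card ⟨S, hSF⟩
  simp only [F, Finset.mem_filter, Finset.mem_powerset] at hT hmax
  refine ⟨T, hT.2.1, hT.2.2, fun c hc hfree => ?_⟩
  by_contra hcT
  have := hmax (insert c T) ⟨Finset.insert_subset (mem_windowChords.mpr hc) hT.1,
    hT.2.1.trans (Finset.subset_insert _ _), hT.2.2.insert_of_forall_not_crosses hc hfree⟩
  rw [Finset.card_insert_of_notMem hcT] at this
  omega

lemma IsNoncrossing.card_le (hN : IsNoncrossing L R S) (hLR : L < R) :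
    (S.card : ℤ) ≤ R - L - 1 := by
  obtain ⟨T, hST, hT, hTs⟩ := hN.exists_isSaturated_superset
  have := Finset.card_le_card hST
  have := hT.card_eq_of_isSaturated hTs hLR
  omega

lemma IsNoncrossing.bound_mem_of_card_eq (hN : IsNoncrossing L R S) (hLR : L + 2 ≤ R)
    (hcard : (S.card : ℤ) = R - L - 1) : (L, R) ∈ S := by
  classical
  by_contra h
  have hins := hN.insert_of_forall_not_crosses ⟨le_rfl, hLR, le_rfl⟩
    fun c' hc' => (hN.1 c' hc').not_crosses_bound.symm
  have := hins.card_le (by omega)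
  rw [Finset.card_insert_of_notMem h] at this
  push_cast at this
  omega

end Chords

section Arcs

variable {n : ℕ} {X : Set (Arc n)} {x₀ : ℤ} {d : ℕ} {c : ℤ × ℤ}

lemma Arc.compatible_comm (a b : Arc n) : a.Compatible b ↔ b.Compatible a := by
  cases a <;> cases b <;> simp only [Arc.Compatible]
  constructor <;> rintro h ⟨x, y, hx, hy, hp⟩ <;> exact h ⟨y, x, hy, hx, hp.symm⟩

def chordArc (c : ℤ × ℤ) : Arc n :=
  .inner (c.1 : ZMod n) (c.2 - c.1).toNat

lemma chordArc_mk (a : ℤ) (s : ℕ) : (chordArc (a, a + s) : Arc n) = .inner (a : ZMod n) s := by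
  simp [chordArc]

/-- Compatibility is invariant under translating both lifts by the same integer, so it suffices
to test lifts of the second arc against the fixed lift `c` of the first. -/
lemma compatible_chordArc_inner_iff (hc : c.1 ≤ c.2) {k : ZMod n} {s : ℕ} :
    (chordArc c).Compatible (.inner k s) ↔
      ∀ y : ℤ, (y : ZMod n) = k → ¬ Crosses c (y, y + s) ∧ ¬ Crosses (y, y + s) c := by
  have ht : ((c.2 - c.1).toNat : ℤ) = c.2 - c.1 := Int.toNat_of_nonneg (by omega)
  simp only [chordArc, Arc.Compatible, Crosses, ht]
  constructor
  · intro h y hy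
    constructor <;> intro hp <;> exact h ⟨c.1, y, rfl, hy, by omega⟩
  · rintro h ⟨x, y, hx, hy, hp⟩
    have hy' : ((y + (c.1 - x) : ℤ) : ZMod n) = k := by push_cast; rw [hx, ← hy]; ring
    have := h _ hy'
    omega

lemma compatible_chordArc_proj_iff (hc : c.1 ≤ c.2) {w : ZMod n} :
    (chordArc c).Compatible (.proj w) ↔
      ∀ y : ℤ, (y : ZMod n) = w → ¬ (c.1 < y ∧ y < c.2) := by
  have ht : ((c.2 - c.1).toNat : ℤ) = c.2 - c.1 := Int.toNat_of_nonneg (by omega)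
  simp only [chordArc, Arc.Compatible, ht]
  constructor
  · intro h y hy hp
    exact h ⟨c.1, y, rfl, hy, by omega⟩
  · rintro h ⟨x, y, hx, hy, hp⟩
    have hy' : ((y + (c.1 - x) : ℤ) : ZMod n) = w := by push_cast; rw [hx, ← hy]; ring
    have := h _ hy'
    omega

/-- A chord of length at most `n` crosses none of its translates by multiples of `n`. -/
lemma compatible_chordArc_self (hc : c.1 ≤ c.2) (hcn : c.2 - c.1 ≤ n) :
    (chordArc c : Arc n).Compatible (chordArc c) := by
  have ht : ((c.2 - c.1).toNat : ℤ) = c.2 - c.1 := Int.toNat_of_nonneg (by omega)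
  refine (compatible_chordArc_inner_iff hc).mpr fun y hy => ?_
  have hdvd := (ZMod.intCast_eq_intCast_iff_dvd_sub _ _ _).mp hy
  unfold Crosses
  constructor <;> intro h <;>
    have := Int.eq_zero_of_abs_lt_dvd hdvd (abs_lt.mpr ⟨by omega, by omega⟩) <;> omega

open scoped Classical in
/-- The integer lifts of the fan `X_{i,j}`, with `x₀` lifting `i` and `d` the length from `i`
to `j`. -/
noncomputable def fanChords (X : Set (Arc n)) (x₀ : ℤ) (d : ℕ) : Finset (ℤ × ℤ) :=
  (windowChords x₀ (x₀ + d)).filter fun c => chordArc c ∈ X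

lemma mem_fanChords :
    c ∈ fanChords X x₀ d ↔ InWindow x₀ (x₀ + d) c ∧ chordArc c ∈ X := by
  simp only [fanChords, Finset.mem_filter, mem_windowChords]

lemma fanSet_eq_image (hadm : ∀ a ∈ X, a.IsAdmissible) :
    fanSet n X x₀ d = chordArc '' ↑(fanChords X x₀ d) := by
  ext arc
  simp only [fanSet, Set.mem_ofPred_eq, Set.mem_image, Finset.mem_coe, mem_fanChords]
  constructor
  · rintro ⟨hmem, k, s, rfl, x, rfl, hx1, hx2⟩
    have hs : 2 ≤ s := (hadm _ hmem).1
    refine ⟨(x, x + s), ⟨⟨hx1, by simp only; omega, hx2⟩, ?_⟩, chordArc_mk x s⟩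
    rwa [chordArc_mk]
  · rintro ⟨c, ⟨hc, hcX⟩, rfl⟩
    unfold InWindow at hc
    have ht : ((c.2 - c.1).toNat : ℤ) = c.2 - c.1 := Int.toNat_of_nonneg (by omega)
    exact ⟨hcX, _, _, rfl, c.1, rfl, hc.1, by omega⟩

lemma chordArc_injOn {L R : ℤ} (hRL : R ≤ L + n) :
    Set.InjOn (chordArc (n := n)) {c | InWindow L R c} := by
  intro c hc c' hc' h
  simp only [Set.mem_ofPred_eq, InWindow] at hc hc'
  simp only [chordArc, Arc.inner.injEq, ZMod.intCast_eq_intCast_iff_dvd_sub] at h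
  obtain ⟨hdvd, hlen⟩ := h
  have h1 := Int.eq_zero_of_abs_lt_dvd hdvd (abs_lt.mpr ⟨by omega, by omega⟩)
  have ht : ((c.2 - c.1).toNat : ℤ) = c.2 - c.1 := Int.toNat_of_nonneg (by omega)
  have ht' : ((c'.2 - c'.1).toNat : ℤ) = c'.2 - c'.1 := Int.toNat_of_nonneg (by omega)
  exact Prod.ext (by omega) (by omega)

lemma ncard_fanSet (hadm : ∀ a ∈ X, a.IsAdmissible) (hdn : d ≤ n) :
    (fanSet n X x₀ d).ncard = (fanChords X x₀ d).card := by
  rw [fanSet_eq_image hadm, Set.InjOn.ncard_image, Set.ncard_coe_finset]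
  exact (chordArc_injOn (by omega)).mono fun c hc => (mem_fanChords.mp hc).1

lemma fanChords_isNoncrossing (hcomp : ∀ a ∈ X, ∀ b ∈ X, a.Compatible b) :
    IsNoncrossing x₀ (x₀ + d) (fanChords X x₀ d) := by
  refine ⟨fun c hc => (mem_fanChords.mp hc).1, fun c hc c' hc' hcross => ?_⟩
  obtain ⟨hcw, hcX⟩ := mem_fanChords.mp hc
  obtain ⟨hc'w, hc'X⟩ := mem_fanChords.mp hc'
  unfold InWindow at hcw hc'w
  have ht : ((c'.2 - c'.1).toNat : ℤ) = c'.2 - c'.1 := Int.toNat_of_nonneg (by omega)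
  have := ((compatible_chordArc_inner_iff (by omega)).mp (hcomp _ hcX _ hc'X) c'.1 rfl).1
  rw [ht, add_sub_cancel] at this
  exact this hcross

/-- The arc `(x₀, d)` of `X` shields the window from the arcs of `X` outside the fan. -/
lemma compatible_chordArc_of_forall_not_crosses (hX : PairwiseCompatible n X)
    (hin : Arc.inner (x₀ : ZMod n) d ∈ X) (hc : InWindow x₀ (x₀ + d) c)
    (hfree : ∀ c' ∈ fanChords X x₀ d, ¬ Crosses c c' ∧ ¬ Crosses c' c)
    {b : Arc n} (hb : b ∈ X) : (chordArc c).Compatible b := by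
  have hbound : (chordArc (x₀, x₀ + d) : Arc n).Compatible b := by
    rw [chordArc_mk]; exact hX.2 _ hin _ hb
  have hc₀ : x₀ ≤ x₀ + d := by omega
  have hc₁ : c.1 ≤ c.2 := by unfold InWindow at hc; omega
  cases b with
  | inner k s =>
    have hs : 2 ≤ s := (hX.1 _ hb).1
    refine (compatible_chordArc_inner_iff hc₁).mpr fun y hy => ?_
    have hq := (compatible_chordArc_inner_iff hc₀).mp hbound y hy
    by_contra hcross
    have hqw := hc.of_crosses (by simp only; omega) hq (by tauto)
    have hqX : chordArc (y, y + s) ∈ X := by rwa [chordArc_mk, hy]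
    exact hcross (hfree _ (mem_fanChords.mpr ⟨hqw, hqX⟩))
  | proj w =>
    refine (compatible_chordArc_proj_iff hc₁).mpr fun y hy hcy => ?_
    exact (compatible_chordArc_proj_iff hc₀).mp hbound y hy (by unfold InWindow at hc; omega)

lemma fanChords_isSaturated (hX : IsTriangulation n X) (hdn : d ≤ n)
    (hin : Arc.inner (x₀ : ZMod n) d ∈ X) :
    IsSaturated x₀ (x₀ + d) (fanChords X x₀ d) := by
  obtain ⟨hpc, hmax⟩ := hX
  intro c hc hfree
  have hcompat := fun b (hb : b ∈ X) =>
    compatible_chordArc_of_forall_not_crosses hpc hin hc hfree hb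
  unfold InWindow at hc
  have ht : ((c.2 - c.1).toNat : ℤ) = c.2 - c.1 := Int.toNat_of_nonneg (by omega)
  have hY : PairwiseCompatible n (insert (chordArc c) X) := by
    refine ⟨?_, ?_⟩
    · rintro a (rfl | ha)
      · simp only [chordArc, Arc.IsAdmissible]; omega
      · exact hpc.1 a ha
    · rintro a (rfl | ha) b (rfl | hb)
      · exact compatible_chordArc_self (by omega) (by omega)
      · exact hcompat b hb
      · exact (Arc.compatible_comm _ _).mp (hcompat a ha)
      · exact hpc.2 a ha b hb
  refine mem_fanChords.mpr ⟨hc, ?_⟩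
  rw [← hmax _ hY (Set.subset_insert _ _)]
  exact Set.mem_insert _ _

end Arcs

theorem fan_card_general (n : ℕ) (X : Set (Arc n))
    (hX : IsTriangulation n X) (i : ZMod n) (d : ℕ)
    (hd1 : 1 ≤ d) (hdn : d ≤ n)
    (x₀ : ℤ) (hx₀ : (x₀ : ZMod n) = i) :
    (fanSet n X x₀ d).ncard ≤ d - 1 ∧
      (2 ≤ d → ((fanSet n X x₀ d).ncard = d - 1 ↔ Arc.inner i d ∈ X)) := by
  subst hx₀
  have hN : IsNoncrossing x₀ (x₀ + d) (fanChords X x₀ d) := fanChords_isNoncrossing hX.1.2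
  have hcard := ncard_fanSet (x₀ := x₀) hX.1.1 hdn
  have hle := hN.card_le (by omega)
  refine ⟨by omega, fun hd2 => ⟨fun h => ?_, fun hin => ?_⟩⟩
  · have := (mem_fanChords.mp (hN.bound_mem_of_card_eq (by omega) (by omega))).2
    rwa [chordArc_mk] at this
  · have := hN.card_eq_of_isSaturated (fanChords_isSaturated hX hdn hin) (by omega)
    omega

/-- **Adachi, Lemma 2.3.** Let `X` be a triangulation of the punctured
`n`-gon, `i, j ∈ ℤ/nℤ`, and `d ∈ {1, …, n}` the representative of `j − i`
modulo `n`. Then `|X_{i,j}| ≤ d − 1`, and if `d ≥ 2` then `|X_{i,j}| = d − 1`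
if and only if the inner arc from `i` to `j` belongs to `X`. -/
theorem fan_card (n : ℕ) (hn : 0 < n) (X : Set (Arc n))
    (hX : IsTriangulation n X) (i j : ZMod n) (d : ℕ)
    (hd1 : 1 ≤ d) (hdn : d ≤ n) (hdij : ((d : ℕ) : ZMod n) = j - i)
    (x₀ : ℤ) (hx₀ : (x₀ : ZMod n) = i) :
    (fanSet n X x₀ d).ncard ≤ d - 1 ∧
      (2 ≤ d → ((fanSet n X x₀ d).ncard = d - 1 ↔ Arc.inner i d ∈ X)) :=
  fan_card_general n X hX i d hd1 hdn x₀ hx₀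

end Punctured
end
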